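/- arXiv:1607.07482 — 9 statements merged into one kernel-verified Lean document; each statement's English description precedes it below -/
import Mathlib

section
/- Let $\mathcal{R}$ be a pre-Rademacher family in a Boolean algebra $\mathcal{B}$ and let $\mathcal{P}$ be the set of all particles with respect to $\mathcal{R}$. Then $\overline{\mathcal{P}} = \mathcal{P} \cup \{\mathbf{0}\}$ is a semialgebra in $\mathcal{B}$: it contains $\mathbf{0}$ and $\mathbf{1}$, is closed under binary intersection, and whenever $a_1, b \in \overline{\mathcal{P}}$ with $a_1 \le b$, there exist $n \ge 1$ and $a_2,\dots,a_n \in \overline{\mathcal{P}}$ such that $b = a_1 \sqcup a_2 \sqcup \cdots \sqcup a_n$ is a disjoint union. -/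
/-- The product of a sign by an element of a Boolean algebra: `1 ⬝ x = x`, `(-1) ⬝ x = xᶜ`. -/
def sgn {α : Type*} [BooleanAlgebra α] (θ : Bool) (x : α) : α := if θ then x else xᶜ

/-- A pre-Rademacher family: a family of distinct elements all of whose finite
particles are nonzero. -/
def IsPreRademacher {α ι : Type*} [BooleanAlgebra α] (r : ι → α) : Prop :=
  Function.Injective r ∧
    ∀ (J : Finset ι) (θ : ι → Bool), J.inf (fun j => sgn (θ j) (r j)) ≠ ⊥

/-- The set of all particles with respect to a family `r`. -/
def particles {α ι : Type*} [BooleanAlgebra α] (r : ι → α) : Set α :=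
  {x | ∃ (J : Finset ι) (θ : ι → Bool), x = J.inf (fun j => sgn (θ j) (r j))}

section Aux

variable {α ι : Type*} [BooleanAlgebra α]

lemma foldr_sup_append (l₁ l₂ : List α) :
    (l₁ ++ l₂).foldr (· ⊔ ·) ⊥ = l₁.foldr (· ⊔ ·) ⊥ ⊔ l₂.foldr (· ⊔ ·) ⊥ := by
  induction l₁ with
  | nil => simp
  | cons a l ih => simp [ih, sup_assoc]

lemma le_foldr_sup {x : α} {l : List α} (h : x ∈ l) : x ≤ l.foldr (· ⊔ ·) ⊥ := by
  induction l with
  | nil => simp at h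
  | cons a l ih =>
    rcases List.mem_cons.mp h with rfl | h
    · exact le_sup_left
    · exact le_sup_of_le_right (ih h)

lemma particle_split [DecidableEq ι] (r : ι → α) (D : Finset ι) :
    ∀ K : Finset ι, Disjoint D K → ∀ η : ι → Bool,
    ∃ l : List α, (∀ x ∈ l, x ∈ particles r) ∧ l.Pairwise Disjoint ∧
      K.inf (fun j => sgn (η j) (r j)) = l.foldr (· ⊔ ·) ⊥ ∧
      ∀ θ : ι → Bool, (∀ j ∈ K, θ j = η j) →
        (K ∪ D).inf (fun j => sgn (θ j) (r j)) ∈ l := by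
  classical
  induction D using Finset.induction_on with
  | empty =>
    intro K _ η
    refine ⟨[K.inf (fun j => sgn (η j) (r j))], ?_, ?_, ?_, ?_⟩
    · intro x hx
      simp only [List.mem_singleton] at hx
      exact ⟨K, η, hx⟩
    · simp
    · simp
    · intro θ hθ
      simp only [Finset.union_empty, List.mem_singleton]
      refine Finset.inf_congr rfl fun j hj => ?_
      rw [hθ j hj]
  | @insert i D' hi ih =>
    intro K hdisj η
    have hiK : i ∉ K := fun h => (Finset.disjoint_left.mp hdisj (Finset.mem_insert_self i D')) h
    have hD'K : Disjoint D' K :=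
      Finset.disjoint_of_subset_left (Finset.subset_insert i D') hdisj
    set η₁ : ι → Bool := fun j => if j = i then true else η j with hη₁
    set η₂ : ι → Bool := fun j => if j = i then false else η j with hη₂
    have hdisj' : Disjoint D' (insert i K) := by
      rw [Finset.disjoint_insert_right]
      exact ⟨hi, hD'K⟩
    obtain ⟨l₁, h₁mem, h₁pw, h₁fold, h₁all⟩ := ih (insert i K) hdisj' η₁
    obtain ⟨l₂, h₂mem, h₂pw, h₂fold, h₂all⟩ := ih (insert i K) hdisj' η₂
    have hK₁ : K.inf (fun j => sgn (η₁ j) (r j)) = K.inf (fun j => sgn (η j) (r j)) := by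
      refine Finset.inf_congr rfl fun j hj => ?_
      have hji : j ≠ i := fun h => hiK (h ▸ hj)
      simp [hη₁, hji]
    have hK₂ : K.inf (fun j => sgn (η₂ j) (r j)) = K.inf (fun j => sgn (η j) (r j)) := by
      refine Finset.inf_congr rfl fun j hj => ?_
      have hji : j ≠ i := fun h => hiK (h ▸ hj)
      simp [hη₂, hji]
    have h₁eq : (insert i K).inf (fun j => sgn (η₁ j) (r j))
        = r i ⊓ K.inf (fun j => sgn (η j) (r j)) := by
      rw [Finset.inf_insert, hK₁]
      congr 1
      simp [hη₁, sgn]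
    have h₂eq : (insert i K).inf (fun j => sgn (η₂ j) (r j))
        = (r i)ᶜ ⊓ K.inf (fun j => sgn (η j) (r j)) := by
      rw [Finset.inf_insert, hK₂]
      congr 1
      simp [hη₂, sgn]
    refine ⟨l₁ ++ l₂, ?_, ?_, ?_, ?_⟩
    · intro x hx
      rcases List.mem_append.mp hx with h | h
      · exact h₁mem x h
      · exact h₂mem x h
    · rw [List.pairwise_append]
      refine ⟨h₁pw, h₂pw, fun x hx y hy => ?_⟩
      have hx' : x ≤ r i := by
        calc x ≤ l₁.foldr (· ⊔ ·) ⊥ := le_foldr_sup hx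
        _ = _ := h₁fold.symm
        _ ≤ r i := h₁eq.le.trans inf_le_left
      have hy' : y ≤ (r i)ᶜ := by
        calc y ≤ l₂.foldr (· ⊔ ·) ⊥ := le_foldr_sup hy
        _ = _ := h₂fold.symm
        _ ≤ (r i)ᶜ := h₂eq.le.trans inf_le_left
      exact Disjoint.mono hx' hy' disjoint_compl_right
    · rw [foldr_sup_append, ← h₁fold, ← h₂fold, h₁eq, h₂eq, ← inf_sup_right]
      simp
    · intro θ hθ
      have hunion : K ∪ insert i D' = insert i K ∪ D' := by
        rw [Finset.union_insert, Finset.insert_union]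
      rw [hunion]
      rcases Bool.eq_false_or_eq_true (θ i) with h | h
      · refine List.mem_append_left _ (h₁all θ (fun j hj => ?_))
        rcases Finset.mem_insert.mp hj with rfl | hj'
        · simp [hη₁, h]
        · have : j ≠ i := fun hh => hiK (hh ▸ hj')
          simp [hη₁, this, hθ j hj']
      · refine List.mem_append_right _ (h₂all θ (fun j hj => ?_))
        rcases Finset.mem_insert.mp hj with rfl | hj'
        · simp [hη₂, h]
        · have : j ≠ i := fun hh => hiK (hh ▸ hj')
          simp [hη₂, this, hθ j hj']

end Aux

theorem stmt1 {α ι : Type*} [BooleanAlgebra α] (r : ι → α) (hR : IsPreRademacher r) :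
    (⊥ : α) ∈ insert (⊥ : α) (particles r) ∧
    (⊤ : α) ∈ insert (⊥ : α) (particles r) ∧
    (∀ a ∈ insert (⊥ : α) (particles r), ∀ b ∈ insert (⊥ : α) (particles r),
      a ⊓ b ∈ insert (⊥ : α) (particles r)) ∧
    (∀ a₁ ∈ insert (⊥ : α) (particles r), ∀ b ∈ insert (⊥ : α) (particles r), a₁ ≤ b →
      ∃ l : List α, (∀ a ∈ l, a ∈ insert (⊥ : α) (particles r)) ∧
        (a₁ :: l).Pairwise Disjoint ∧ b = (a₁ :: l).foldr (· ⊔ ·) ⊥) := by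
  classical
  obtain ⟨hinj, hne⟩ := hR
  refine ⟨Set.mem_insert _ _, Set.mem_insert_of_mem _ ⟨∅, fun _ => true, by simp⟩, ?_, ?_⟩
  · -- closure under meet
    rintro a ha b hb
    rcases ha with rfl | ⟨J, θ, rfl⟩
    · simp
    rcases hb with rfl | ⟨K, η, rfl⟩
    · simp
    by_cases hagree : ∀ j ∈ J ∩ K, θ j = η j
    · refine Set.mem_insert_of_mem _ ⟨J ∪ K, fun j => if j ∈ J then θ j else η j, ?_⟩
      apply le_antisymm
      · apply Finset.le_inf
        intro j hj
        by_cases hJ : j ∈ J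
        · simp only [if_pos hJ]
          exact inf_le_of_left_le (Finset.inf_le hJ)
        · have hK : j ∈ K := by
            rcases Finset.mem_union.mp hj with h | h
            · exact absurd h hJ
            · exact h
          simp only [if_neg hJ]
          exact inf_le_of_right_le (Finset.inf_le hK)
      · apply le_inf
        · apply Finset.le_inf
          intro j hj
          refine le_trans (Finset.inf_le (Finset.mem_union_left K hj)) ?_
          simp [hj]
        · apply Finset.le_inf
          intro j hj
          refine le_trans (Finset.inf_le (Finset.mem_union_right J hj)) ?_
          by_cases hJ : j ∈ J
          · simp [hJ, hagree j (Finset.mem_inter.mpr ⟨hJ, hj⟩)]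
          · simp [hJ]
    · push_neg at hagree
      obtain ⟨j, hj, hθη⟩ := hagree
      have h1 : J.inf (fun j => sgn (θ j) (r j)) ≤ sgn (θ j) (r j) :=
        Finset.inf_le (Finset.mem_inter.mp hj).1
      have h2 : K.inf (fun j => sgn (η j) (r j)) ≤ sgn (η j) (r j) :=
        Finset.inf_le (Finset.mem_inter.mp hj).2
      have : J.inf (fun j => sgn (θ j) (r j)) ⊓ K.inf (fun j => sgn (η j) (r j)) ≤ ⊥ := by
        refine le_trans (inf_le_inf h1 h2) ?_
        rcases Bool.eq_false_or_eq_true (θ j) with h | h <;>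
          rcases Bool.eq_false_or_eq_true (η j) with h' | h' <;>
          simp_all [sgn]
      rw [le_bot_iff.mp this]
      exact Set.mem_insert _ _
  · -- refinement
    rintro a₁ ha₁ b hb hab
    rcases hb with rfl | ⟨K, η, rfl⟩
    · -- b = ⊥
      rcases ha₁ with rfl | ⟨J, θ, rfl⟩
      · exact ⟨[], by simp, by simp, by simp⟩
      · exact absurd (le_bot_iff.mp hab) (hne J θ)
    rcases ha₁ with rfl | ⟨J, θ, rfl⟩
    · refine ⟨[K.inf (fun j => sgn (η j) (r j))], ?_, ?_, ?_⟩
      · intro a ha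
        simp only [List.mem_singleton] at ha
        exact Set.mem_insert_of_mem _ ⟨K, η, ha⟩
      · simp
      · simp
    -- main case: both particles
    have hagree : ∀ j ∈ J ∩ K, θ j = η j := by
      intro j hj
      by_contra hθη
      have h1 : J.inf (fun j => sgn (θ j) (r j)) ≤ sgn (θ j) (r j) :=
        Finset.inf_le (Finset.mem_inter.mp hj).1
      have h2 : J.inf (fun j => sgn (θ j) (r j)) ≤ sgn (η j) (r j) :=
        hab.trans (Finset.inf_le (Finset.mem_inter.mp hj).2)
      have : J.inf (fun j => sgn (θ j) (r j)) ≤ ⊥ := by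
        refine le_trans (le_inf h1 h2) ?_
        rcases Bool.eq_false_or_eq_true (θ j) with h | h <;>
          rcases Bool.eq_false_or_eq_true (η j) with h' | h' <;>
          simp_all [sgn]
      exact hne J θ (le_bot_iff.mp this)
    obtain ⟨l, hl1, hl2, hl3, hl4⟩ := particle_split r (J \ K) K Finset.sdiff_disjoint η
    set θ' : ι → Bool := fun j => if j ∈ K then η j else θ j with hθ'
    have hmem := hl4 θ' (fun j hj => if_pos hj)
    have ha : J.inf (fun j => sgn (θ j) (r j))
        = (K ∪ (J \ K)).inf (fun j => sgn (θ' j) (r j)) := by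
      apply le_antisymm
      · apply Finset.le_inf
        intro j hj
        rcases Finset.mem_union.mp hj with h | h
        · simp only [hθ', if_pos h]
          exact hab.trans (Finset.inf_le h)
        · have hjJ : j ∈ J := (Finset.mem_sdiff.mp h).1
          have hjK : j ∉ K := (Finset.mem_sdiff.mp h).2
          simp only [hθ', if_neg hjK]
          exact Finset.inf_le hjJ
      · apply Finset.le_inf
        intro j hj
        by_cases hjK : j ∈ K
        · refine le_trans (Finset.inf_le (Finset.mem_union_left _ hjK)) ?_
          simp [hθ', hjK, hagree j (Finset.mem_inter.mpr ⟨hj, hjK⟩)]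
        · refine le_trans (Finset.inf_le (Finset.mem_union_right _
            (Finset.mem_sdiff.mpr ⟨hj, hjK⟩))) ?_
          simp [hθ', hjK]
    rw [← ha] at hmem
    obtain ⟨l₁, l₂, rfl⟩ := List.append_of_mem hmem
    refine ⟨l₁ ++ l₂, ?_, ?_, ?_⟩
    · intro a hax
      refine Set.mem_insert_of_mem _ (hl1 a ?_)
      rcases List.mem_append.mp hax with h | h
      · exact List.mem_append_left _ h
      · exact List.mem_append_right _ (List.mem_cons_of_mem _ h)
    · exact (List.perm_middle.pairwise_iff (fun h => Disjoint.symm h)).mp hl2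
    · rw [foldr_sup_append] at hl3
      rw [List.foldr_cons] at hl3 ⊢
      rw [foldr_sup_append, hl3, sup_left_comm]
end

section
/- Let $\mathcal{R} = (r_i)_{i\in I}$ be a pre-Rademacher family in a Boolean algebra $\mathcal{B}$, let $\Theta = (\overline{\theta}_i)_{i\in I}$ be a fixed collection of signs, and let $a, b$ be nonzero elements of the smallest order closed subalgebra containing $\mathcal{R}$ that are both lower bounds of the set $\{\overline{\theta}_i r_i : i \in I\}$. Then $a = b$. -/
/-- A subset of a Boolean algebra which is a subalgebra. -/
def IsSubalg {α : Type*} [BooleanAlgebra α] (S : Set α) : Prop :=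
  ⊥ ∈ S ∧ ⊤ ∈ S ∧ (∀ x ∈ S, xᶜ ∈ S) ∧
    (∀ x ∈ S, ∀ y ∈ S, x ⊔ y ∈ S) ∧ (∀ x ∈ S, ∀ y ∈ S, x ⊓ y ∈ S)

/-- A set is order closed if it contains all existing suprema of its subsets. -/
def IsOrderClosedSet {α : Type*} [BooleanAlgebra α] (S : Set α) : Prop :=
  ∀ C ⊆ S, ∀ b : α, IsLUB C b → b ∈ S

/-- The smallest order closed subalgebra containing `R`. -/
def tauSubalg {α : Type*} [BooleanAlgebra α] (R : Set α) : Set α :=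
  ⋂₀ {S : Set α | IsSubalg S ∧ IsOrderClosedSet S ∧ R ⊆ S}

/-- A nonzero element below every `sgn (θ i) (r i)` decides every element of the
τ-subalgebra generated by the range of `r`. -/
lemma decides {α ι : Type*} [BooleanAlgebra α] (r : ι → α) (θ : ι → Bool) (c : α)
    (hc : ∀ i, c ≤ sgn (θ i) (r i)) :
    ∀ x ∈ tauSubalg (Set.range r), c ≤ x ∨ c ≤ xᶜ := by
  intro x hx
  refine hx {x | c ≤ x ∨ c ≤ xᶜ} ⟨⟨?_, ?_, ?_, ?_, ?_⟩, ?_, ?_⟩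
  · exact Or.inr (by simp)
  · exact Or.inl le_top
  · rintro y (h | h)
    · exact Or.inr (by simpa using h)
    · exact Or.inl h
  · rintro y (hy | hy) z (hz | hz)
    · exact Or.inl (hy.trans le_sup_left)
    · exact Or.inl (hy.trans le_sup_left)
    · exact Or.inl (hz.trans le_sup_right)
    · exact Or.inr (by rw [compl_sup]; exact le_inf hy hz)
  · rintro y (hy | hy) z (hz | hz)
    · exact Or.inl (le_inf hy hz)
    · exact Or.inr (by rw [compl_inf]; exact hz.trans le_sup_right)
    · exact Or.inr (by rw [compl_inf]; exact hy.trans le_sup_left)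
    · exact Or.inr (by rw [compl_inf]; exact hy.trans le_sup_left)
  · intro C hC s hs
    by_cases h : ∃ y ∈ C, c ≤ y
    · obtain ⟨y, hyC, hcy⟩ := h
      exact Or.inl (hcy.trans (hs.1 hyC))
    · push_neg at h
      refine Or.inr ?_
      have hub : ∀ y ∈ C, y ≤ cᶜ := by
        intro y hy
        rcases hC hy with h1 | h1
        · exact absurd h1 (h y hy)
        · exact le_compl_comm.mp h1
      exact le_compl_comm.mp (hs.2 hub)
  · rintro _ ⟨i, rfl⟩
    have := hc i
    cases hθ : θ i
    · rw [sgn, hθ] at this; exact Or.inr (by simpa using this)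
    · rw [sgn, hθ] at this; exact Or.inl (by simpa using this)

theorem stmt2 {α ι : Type*} [BooleanAlgebra α] (r : ι → α) (hR : IsPreRademacher r)
    (θ : ι → Bool) (a b : α)
    (ha : a ∈ tauSubalg (Set.range r)) (hb : b ∈ tauSubalg (Set.range r))
    (ha0 : a ≠ ⊥) (hb0 : b ≠ ⊥)
    (haL : ∀ i, a ≤ sgn (θ i) (r i)) (hbL : ∀ i, b ≤ sgn (θ i) (r i)) :
    a = b := by
  set T := tauSubalg (Set.range r) with hT
  -- exclusivity for nonzero elements
  have excl : ∀ c : α, c ≠ ⊥ → ∀ x : α, c ≤ x → c ≤ xᶜ → False := by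
    intro c hc x h1 h2
    exact hc (le_bot_iff.mp (by simpa using le_inf h1 h2))
  have keyA := decides r θ a haL
  have keyB := decides r θ b hbL
  have notA : ∀ x ∈ T, (a ≤ xᶜ ↔ ¬ a ≤ x) :=
    fun x hx => ⟨fun h1 h2 => excl a ha0 x h2 h1, fun h => (keyA x hx).resolve_left h⟩
  have notB : ∀ x ∈ T, (b ≤ xᶜ ↔ ¬ b ≤ x) :=
    fun x hx => ⟨fun h1 h2 => excl b hb0 x h2 h1, fun h => (keyB x hx).resolve_left h⟩
  -- τ-subalgebra is a subalgebra and order closed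
  have htauBot : (⊥ : α) ∈ T := fun S hS => hS.1.1
  have htauTop : (⊤ : α) ∈ T := fun S hS => hS.1.2.1
  have htauCompl : ∀ x ∈ T, xᶜ ∈ T := fun x hx S hS => hS.1.2.2.1 x (hx S hS)
  have htauSup : ∀ x ∈ T, ∀ y ∈ T, x ⊔ y ∈ T :=
    fun x hx y hy S hS => hS.1.2.2.2.1 x (hx S hS) y (hy S hS)
  have htauInf : ∀ x ∈ T, ∀ y ∈ T, x ⊓ y ∈ T :=
    fun x hx y hy S hS => hS.1.2.2.2.2 x (hx S hS) y (hy S hS)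
  have htauO : IsOrderClosedSet T :=
    fun C hC s hs S hS => hS.2.1 C (fun x hx => hC hx S hS) s hs
  have htauR : ∀ i, r i ∈ T := fun i S hS => hS.2.2 ⟨i, rfl⟩
  -- the comparison set
  set W : Set α := {x | x ∈ T ∧ (a ≤ x ↔ b ≤ x)} with hW
  have hWmem : W ∈ {S : Set α | IsSubalg S ∧ IsOrderClosedSet S ∧ Set.range r ⊆ S} := by
    refine ⟨⟨?_, ?_, ?_, ?_, ?_⟩, ?_, ?_⟩
    · exact ⟨htauBot, by simp [le_bot_iff, ha0, hb0]⟩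
    · exact ⟨htauTop, by simp⟩
    · rintro x ⟨hx, hiff⟩
      exact ⟨htauCompl x hx, by rw [notA x hx, notB x hx, hiff]⟩
    · rintro x ⟨hx, hiffx⟩ y ⟨hy, hiffy⟩
      refine ⟨htauSup x hx y hy, ?_⟩
      have supA : a ≤ x ⊔ y ↔ (a ≤ x ∨ a ≤ y) := by
        constructor
        · intro h
          by_contra hcon
          push_neg at hcon
          have h1 : a ≤ xᶜ := (notA x hx).mpr hcon.1
          have h2 : a ≤ yᶜ := (notA y hy).mpr hcon.2
          exact excl a ha0 (x ⊔ y) h (by rw [compl_sup]; exact le_inf h1 h2)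
        · rintro (h | h)
          · exact h.trans le_sup_left
          · exact h.trans le_sup_right
      have supB : b ≤ x ⊔ y ↔ (b ≤ x ∨ b ≤ y) := by
        constructor
        · intro h
          by_contra hcon
          push_neg at hcon
          have h1 : b ≤ xᶜ := (notB x hx).mpr hcon.1
          have h2 : b ≤ yᶜ := (notB y hy).mpr hcon.2
          exact excl b hb0 (x ⊔ y) h (by rw [compl_sup]; exact le_inf h1 h2)
        · rintro (h | h)
          · exact h.trans le_sup_left
          · exact h.trans le_sup_right
      rw [supA, supB, hiffx, hiffy]
    · rintro x ⟨hx, hiffx⟩ y ⟨hy, hiffy⟩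
      exact ⟨htauInf x hx y hy, by rw [le_inf_iff, le_inf_iff, hiffx, hiffy]⟩
    · intro C hC s hs
      have hCT : C ⊆ T := fun x hx => (hC hx).1
      refine ⟨htauO C hCT s hs, ?_⟩
      have hTs : s ∈ T := htauO C hCT s hs
      constructor
      · intro has
        have : ∃ y ∈ C, a ≤ y := by
          by_contra hcon
          push_neg at hcon
          have hub : ∀ y ∈ C, y ≤ aᶜ := fun y hy =>
            le_compl_comm.mp ((notA y (hCT hy)).mpr (hcon y hy))
          exact excl a ha0 s has (le_compl_comm.mp (hs.2 hub))
        obtain ⟨y, hyC, hay⟩ := this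
        exact ((hC hyC).2.mp hay).trans (hs.1 hyC)
      · intro hbs
        have : ∃ y ∈ C, b ≤ y := by
          by_contra hcon
          push_neg at hcon
          have hub : ∀ y ∈ C, y ≤ bᶜ := fun y hy =>
            le_compl_comm.mp ((notB y (hCT hy)).mpr (hcon y hy))
          exact excl b hb0 s hbs (le_compl_comm.mp (hs.2 hub))
        obtain ⟨y, hyC, hby⟩ := this
        exact ((hC hyC).2.mpr hby).trans (hs.1 hyC)
    · rintro _ ⟨i, rfl⟩
      refine ⟨htauR i, ?_⟩
      have hai := haL i
      have hbi := hbL i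
      cases hθ : θ i
      · rw [sgn, hθ] at hai hbi
        exact iff_of_false (fun h => excl a ha0 (r i) h hai)
          (fun h => excl b hb0 (r i) h hbi)
      · rw [sgn, hθ] at hai hbi
        exact iff_of_true hai hbi
  have hbW : b ∈ W := hb W hWmem
  have haW : a ∈ W := ha W hWmem
  exact le_antisymm (hbW.2.mpr le_rfl) (haW.2.mp le_rfl)
end

section
/- Let $\mathcal{R} = (r_i)_{i\in I}$ be an infinite pre-Rademacher family in a Boolean algebra $\mathcal{B}$ and let $a$ be a nonzero element of $\mathcal{B}_\tau(\mathcal{R})$. Then $a$ is an atom of $\mathcal{B}_\tau(\mathcal{R})$ if and only if there exists a collection of signs $(\overline{\theta}_i)_{i\in I}$ such that $a = \bigcap_{i\in I}\overline{\theta}_i r_i$ (the infimum taken in $\mathcal{B}_\tau(\mathcal{R})$). -/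
/-- `a` is an atom of the Boolean algebra structured on the subset `S`. -/
def IsAtomIn {α : Type*} [BooleanAlgebra α] (S : Set α) (a : α) : Prop :=
  a ∈ S ∧ a ≠ ⊥ ∧ ∀ x ∈ S, x ≤ a → x = ⊥ ∨ x = a

section Aux

variable {α : Type*} [BooleanAlgebra α]

lemma tau_subset_of {R S : Set α} (h1 : IsSubalg S) (h2 : IsOrderClosedSet S)
    (h3 : R ⊆ S) : tauSubalg R ⊆ S :=
  Set.sInter_subset_of_mem ⟨h1, h2, h3⟩

lemma subset_tau {R : Set α} : R ⊆ tauSubalg R := fun x hx =>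
  Set.mem_sInter.2 fun _ hS => hS.2.2 hx

lemma tau_inf {R : Set α} {x y : α} (hx : x ∈ tauSubalg R) (hy : y ∈ tauSubalg R) :
    x ⊓ y ∈ tauSubalg R :=
  Set.mem_sInter.2 fun S hS =>
    hS.1.2.2.2.2 x (Set.mem_sInter.1 hx S hS) y (Set.mem_sInter.1 hy S hS)

lemma tau_compl {R : Set α} {x : α} (hx : x ∈ tauSubalg R) : xᶜ ∈ tauSubalg R :=
  Set.mem_sInter.2 fun S hS => hS.1.2.2.1 x (Set.mem_sInter.1 hx S hS)

lemma not_le_compl_of_le {e x : α} (he : e ≠ ⊥) (h : e ≤ x) : ¬ e ≤ xᶜ := fun h' =>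
  he (le_bot_iff.1 ((le_inf h h').trans_eq inf_compl_eq_bot))

/-- Key lemma: two nonzero elements lying below all `sgn (θ i) (r i)` make the same
decisions on every element of the τ-subalgebra. -/
lemma same_decisions {ι : Type*} (r : ι → α) (θ : ι → Bool) {c d : α}
    (hc0 : c ≠ ⊥) (hd0 : d ≠ ⊥)
    (hc : ∀ i, c ≤ sgn (θ i) (r i)) (hd : ∀ i, d ≤ sgn (θ i) (r i)) :
    ∀ y ∈ tauSubalg (Set.range r), (c ≤ y ↔ d ≤ y) := by
  set S : Set α :=
    {y | (c ≤ y ∨ c ≤ yᶜ) ∧ (d ≤ y ∨ d ≤ yᶜ) ∧ (c ≤ y ↔ d ≤ y)} with hSdef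
  have key : tauSubalg (Set.range r) ⊆ S := by
    apply tau_subset_of
    · refine ⟨⟨Or.inr (by simp), Or.inr (by simp), ?_⟩,
        ⟨Or.inl le_top, Or.inl le_top, by simp⟩, ?_, ?_, ?_⟩
      · simp only [le_bot_iff]
        exact ⟨fun h => absurd h hc0, fun h => absurd h hd0⟩
      · -- complement
        rintro x ⟨dcx, ddx, hiff⟩
        refine ⟨?_, ?_, ?_⟩
        · rcases dcx with h | h
          · exact Or.inr (by simpa using h)
          · exact Or.inl h
        · rcases ddx with h | h
          · exact Or.inr (by simpa using h)
          · exact Or.inl h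
        · constructor
          · intro h
            have hnx : ¬ c ≤ x := fun h' => not_le_compl_of_le hc0 h' h
            rcases ddx with h' | h'
            · exact absurd (hiff.2 h') hnx
            · exact h'
          · intro h
            have hnx : ¬ d ≤ x := fun h' => not_le_compl_of_le hd0 h' h
            rcases dcx with h' | h'
            · exact absurd (hiff.1 h') hnx
            · exact h'
      · -- sup
        rintro x ⟨dcx, ddx, hiffx⟩ y ⟨dcy, ddy, hiffy⟩
        have dec_sup : ∀ e : α, (e ≤ x ∨ e ≤ xᶜ) → (e ≤ y ∨ e ≤ yᶜ) →
            (e ≤ x ⊔ y ∨ e ≤ (x ⊔ y)ᶜ) := by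
          intro e hx hy
          rcases hx with h | h
          · exact Or.inl (h.trans le_sup_left)
          · rcases hy with h' | h'
            · exact Or.inl (h'.trans le_sup_right)
            · exact Or.inr (by rw [compl_sup]; exact le_inf h h')
        have sup_iff : ∀ e : α, e ≠ ⊥ → (e ≤ x ∨ e ≤ xᶜ) → (e ≤ y ∨ e ≤ yᶜ) →
            (e ≤ x ⊔ y ↔ (e ≤ x ∨ e ≤ y)) := by
          intro e he0 hx hy
          constructor
          · intro h
            by_contra hcon
            push_neg at hcon
            have h1 : e ≤ xᶜ := hx.resolve_left hcon.1
            have h2 : e ≤ yᶜ := hy.resolve_left hcon.2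
            have : e ≤ (x ⊔ y)ᶜ := by rw [compl_sup]; exact le_inf h1 h2
            exact not_le_compl_of_le he0 h this
          · rintro (h | h)
            · exact h.trans le_sup_left
            · exact h.trans le_sup_right
        refine ⟨dec_sup c dcx dcy, dec_sup d ddx ddy, ?_⟩
        rw [sup_iff c hc0 dcx dcy, sup_iff d hd0 ddx ddy, hiffx, hiffy]
      · -- inf
        rintro x ⟨dcx, ddx, hiffx⟩ y ⟨dcy, ddy, hiffy⟩
        have dec_inf : ∀ e : α, (e ≤ x ∨ e ≤ xᶜ) → (e ≤ y ∨ e ≤ yᶜ) →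
            (e ≤ x ⊓ y ∨ e ≤ (x ⊓ y)ᶜ) := by
          intro e hx hy
          rcases hx with h | h
          · rcases hy with h' | h'
            · exact Or.inl (le_inf h h')
            · exact Or.inr (by rw [compl_inf]; exact h'.trans le_sup_right)
          · exact Or.inr (by rw [compl_inf]; exact h.trans le_sup_left)
        refine ⟨dec_inf c dcx dcy, dec_inf d ddx ddy, ?_⟩
        simp only [le_inf_iff]
        rw [hiffx, hiffy]
    · -- order closed
      intro C hC b hb
      have dec_lub : ∀ e : α, (∀ y ∈ C, e ≤ y ∨ e ≤ yᶜ) →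
          ((∃ y ∈ C, e ≤ y) ∨ e ≤ bᶜ) := by
        intro e hdec
        by_cases hex : ∃ y ∈ C, e ≤ y
        · exact Or.inl hex
        · push_neg at hex
          have : ∀ y ∈ C, y ≤ eᶜ := fun y hy =>
            le_compl_comm.1 ((hdec y hy).resolve_left (hex y hy))
          exact Or.inr (le_compl_comm.1 (hb.2 this))
      have hdc : (∃ y ∈ C, c ≤ y) ∨ c ≤ bᶜ :=
        dec_lub c fun y hy => (hC hy).1
      have hdd : (∃ y ∈ C, d ≤ y) ∨ d ≤ bᶜ :=
        dec_lub d fun y hy => (hC hy).2.1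
      refine ⟨?_, ?_, ?_⟩
      · rcases hdc with ⟨y, hy, h⟩ | h
        · exact Or.inl (h.trans (hb.1 hy))
        · exact Or.inr h
      · rcases hdd with ⟨y, hy, h⟩ | h
        · exact Or.inl (h.trans (hb.1 hy))
        · exact Or.inr h
      · constructor
        · intro h
          rcases hdc with ⟨y, hy, h'⟩ | h'
          · exact ((hC hy).2.2.1 h').trans (hb.1 hy)
          · exact absurd h' (not_le_compl_of_le hc0 h)
        · intro h
          rcases hdd with ⟨y, hy, h'⟩ | h'
          · exact ((hC hy).2.2.2 h').trans (hb.1 hy)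
          · exact absurd h' (not_le_compl_of_le hd0 h)
    · -- contains the range
      rintro x ⟨i, rfl⟩
      have hci := hc i
      have hdi := hd i
      cases hθ : θ i with
      | true =>
        rw [hθ] at hci hdi
        simp only [sgn, if_pos] at hci hdi
        exact ⟨Or.inl hci, Or.inl hdi, by simp [hci, hdi]⟩
      | false =>
        rw [hθ] at hci hdi
        simp only [sgn, Bool.false_eq_true, if_neg] at hci hdi
        refine ⟨Or.inr hci, Or.inr hdi, ?_⟩
        constructor
        · intro h; exact absurd hci (not_le_compl_of_le hc0 h)
        · intro h; exact absurd hdi (not_le_compl_of_le hd0 h)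
  intro y hy
  exact (key hy).2.2

end Aux

theorem stmt3 {α ι : Type*} [BooleanAlgebra α] [Infinite ι] (r : ι → α)
    (hR : IsPreRademacher r) (a : α)
    (ha : a ∈ tauSubalg (Set.range r)) (ha0 : a ≠ ⊥) :
    IsAtomIn (tauSubalg (Set.range r)) a ↔
      ∃ θ : ι → Bool,
        (∀ i, a ≤ sgn (θ i) (r i)) ∧
        (∀ x ∈ tauSubalg (Set.range r), (∀ i, x ≤ sgn (θ i) (r i)) → x ≤ a) := by
  classical
  constructor
  · rintro ⟨haS, -, hatom⟩
    refine ⟨fun i => decide (a ≤ r i), ?_, ?_⟩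
    · intro i
      by_cases h : a ≤ r i
      · simp [sgn, h]
      · have hri : r i ∈ tauSubalg (Set.range r) := subset_tau ⟨i, rfl⟩
        rcases hatom (a ⊓ r i) (tau_inf ha hri) inf_le_left with h0 | h1
        · have : a ≤ (r i)ᶜ := (disjoint_iff.2 h0).le_compl_right
          simp [sgn, h, this]
        · exact absurd (inf_eq_left.1 h1) h
    · intro x hx hxle
      set b := x ⊓ aᶜ with hbdef
      have hbS : b ∈ tauSubalg (Set.range r) := tau_inf hx (tau_compl ha)
      have hble : ∀ i, b ≤ sgn (decide (a ≤ r i)) (r i) := fun i =>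
        inf_le_left.trans (hxle i)
      have hale : ∀ i, a ≤ sgn (decide (a ≤ r i)) (r i) := by
        intro i
        by_cases h : a ≤ r i
        · simp [sgn, h]
        · have hri : r i ∈ tauSubalg (Set.range r) := subset_tau ⟨i, rfl⟩
          rcases hatom (a ⊓ r i) (tau_inf ha hri) inf_le_left with h0 | h1
          · have : a ≤ (r i)ᶜ := (disjoint_iff.2 h0).le_compl_right
            simp [sgn, h, this]
          · exact absurd (inf_eq_left.1 h1) h
      have hb0 : b = ⊥ := by
        by_contra hb0
        have := (same_decisions r (fun i => decide (a ≤ r i)) hb0 ha0 hble hale a ha).2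
          le_rfl
        exact not_le_compl_of_le hb0 this inf_le_right
      have : x ⊓ aᶜ = ⊥ := hb0
      have hd : Disjoint x aᶜ := disjoint_iff.2 this
      simpa using hd.le_compl_right
  · rintro ⟨θ, hθ, -⟩
    refine ⟨ha, ha0, ?_⟩
    intro x hx hxa
    by_cases hx0 : x = ⊥
    · exact Or.inl hx0
    right
    set c := a ⊓ xᶜ with hcdef
    have hcS : c ∈ tauSubalg (Set.range r) := tau_inf ha (tau_compl hx)
    have hc0 : c = ⊥ := by
      by_contra hc0
      have hcle : ∀ i, c ≤ sgn (θ i) (r i) := fun i => inf_le_left.trans (hθ i)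
      have hxle : ∀ i, x ≤ sgn (θ i) (r i) := fun i => hxa.trans (hθ i)
      have := (same_decisions r θ hx0 hc0 hxle hcle x hx).1 le_rfl
      exact not_le_compl_of_le hc0 this inf_le_right
    have hd : Disjoint a xᶜ := disjoint_iff.2 hc0
    exact le_antisymm hxa (by simpa using hd.le_compl_right)
end

section
/- Let $\mathcal{R} = (r_i)_{i\in I}$ be a pre-Rademacher family in a Boolean algebra $\mathcal{B}$. Then there is a unique finitely additive measure $\mu : \mathcal{B}(\mathcal{R}) \to [0,1]$ on the subalgebra generated by $\mathcal{R}$ satisfying $\mu(\bigcap_{k=1}^n \theta_k r_{i_k}) = 2^{-n}$ for all finite collections of distinct indices $i_1,\dots,i_n \in I$ and all signs $\theta_1,\dots,\theta_n \in \{-1,1\}$. -/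
/-- The smallest subalgebra containing `R`. -/
def genSubalg {α : Type*} [BooleanAlgebra α] (R : Set α) : Set α :=
  ⋂₀ {S : Set α | IsSubalg S ∧ R ⊆ S}

/-- `μ` is a finitely additive measure on `𝓑(𝓡)` with values in `[0,1]` assigning
value `2⁻ⁿ` to every particle built on `n` distinct indices. -/
def IsDyadicFAMeasure {α ι : Type*} [BooleanAlgebra α] (r : ι → α) (μ : α → ℝ) : Prop :=
  (∀ x ∈ genSubalg (Set.range r), μ x ∈ Set.Icc (0 : ℝ) 1) ∧
  μ ⊥ = 0 ∧
  (∀ a ∈ genSubalg (Set.range r), ∀ b ∈ genSubalg (Set.range r),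
    Disjoint a b → μ (a ⊔ b) = μ a + μ b) ∧
  (∀ (J : Finset ι) (θ : ι → Bool),
    μ (J.inf fun j => sgn (θ j) (r j)) = (1 / 2 : ℝ) ^ J.card)

namespace Rade

variable {α ι : Type*} [BooleanAlgebra α] [DecidableEq ι] (r : ι → α)

/-- The particle on index set `J` with signs given by membership in `s`. -/
def ptl (J s : Finset ι) : α := J.inf fun j => sgn (decide (j ∈ s)) (r j)

variable {r}

lemma sgn_disjoint (b : Bool) (x : α) : Disjoint (sgn b x) (sgn (!b) x) := by
  cases b <;> simp [sgn, disjoint_compl_right, disjoint_compl_left]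

lemma ptl_ne_bot (hR : IsPreRademacher r) (J s : Finset ι) : ptl r J s ≠ ⊥ :=
  hR.2 J fun j => decide (j ∈ s)

lemma ptl_congr {J s t : Finset ι} (h : ∀ j ∈ J, (j ∈ s ↔ j ∈ t)) :
    ptl r J s = ptl r J t :=
  Finset.inf_congr rfl fun j hj => by rw [decide_eq_decide.mpr (h j hj)]

lemma ptl_mono_inter {J K s : Finset ι} (hJK : J ⊆ K) :
    ptl r K s ≤ ptl r J (s ∩ J) := by
  refine Finset.le_inf fun j hj => ?_
  have : (decide (j ∈ s ∩ J)) = (decide (j ∈ s)) := by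
    simp [Finset.mem_inter, hj]
  rw [this]
  exact Finset.inf_le (hJK hj)

lemma ptl_disjoint (hR : IsPreRademacher r) {J s t : Finset ι}
    (hs : s ⊆ J) (ht : t ⊆ J) (hst : s ≠ t) :
    Disjoint (ptl r J s) (ptl r J t) := by
  have : ∃ j, j ∈ J ∧ ¬ (j ∈ s ↔ j ∈ t) := by
    by_contra h
    push_neg at h
    exact hst (Finset.ext fun j => by
      by_cases hj : j ∈ J
      · exact h j hj
      · constructor <;> intro hh
        · exact absurd (hs hh) hj
        · exact absurd (ht hh) hj)
  obtain ⟨j, hjJ, hj⟩ := this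
  have h1 : ptl r J s ≤ sgn (decide (j ∈ s)) (r j) := Finset.inf_le hjJ
  have h2 : ptl r J t ≤ sgn (decide (j ∈ t)) (r j) := Finset.inf_le hjJ
  have hb : (decide (j ∈ t)) = !(decide (j ∈ s)) := by
    rcases Decidable.em (j ∈ s) with h' | h' <;> rcases Decidable.em (j ∈ t) with h'' | h'' <;>
      simp_all
  exact (sgn_disjoint (decide (j ∈ s)) (r j)).mono h1 (hb ▸ h2)

/-- The set of particles of `J` lying below `x`. -/
noncomputable def Tset (r : ι → α) (J : Finset ι) (x : α) : Finset (Finset ι) :=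
  open Classical in J.powerset.filter fun s => ptl r J s ≤ x

/-- `x` is canonically represented over `J`. -/
def Rep (r : ι → α) (J : Finset ι) (x : α) : Prop := x = (Tset r J x).sup (ptl r J)

lemma mem_Tset {J s : Finset ι} {x : α} : s ∈ Tset r J x ↔ s ⊆ J ∧ ptl r J s ≤ x := by
  simp [Tset, Finset.mem_filter, Finset.mem_powerset]

lemma Tset_subset {J : Finset ι} {x : α} : Tset r J x ⊆ J.powerset :=
  fun s hs => Finset.mem_powerset.mpr (mem_Tset.mp hs).1

lemma Tset_eq (hR : IsPreRademacher r) {J : Finset ι} {T : Finset (Finset ι)}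
    (hT : T ⊆ J.powerset) {x : α} (hx : x = T.sup (ptl r J)) :
    Tset r J x = T := by
  ext s
  simp only [Tset, Finset.mem_filter, Finset.mem_powerset]
  constructor
  · rintro ⟨hsJ, hle⟩
    by_contra hsT
    have : ptl r J s = ptl r J s ⊓ x := (inf_eq_left.mpr hle).symm
    rw [hx, Finset.sup_inf_distrib_left] at this
    have hbot : ∀ t ∈ T, ptl r J s ⊓ ptl r J t = ⊥ := fun t htT =>
      disjoint_iff.mp (ptl_disjoint hR hsJ
        (Finset.mem_powerset.mp (hT htT)) (fun h => hsT (h ▸ htT)))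
    have : ptl r J s = ⊥ := by
      rw [this]
      exact le_bot_iff.mp (Finset.sup_le fun t htT => (hbot t htT).le)
    exact ptl_ne_bot hR J s this
  · intro hsT
    exact ⟨Finset.mem_powerset.mp (hT hsT), hx ▸ Finset.le_sup hsT⟩

lemma rep_of_sup (hR : IsPreRademacher r) {J : Finset ι} {T : Finset (Finset ι)}
    (hT : T ⊆ J.powerset) {x : α} (hx : x = T.sup (ptl r J)) : Rep r J x := by
  rw [Rep, Tset_eq hR hT hx]; exact hx

lemma ptl_union {J M t u : Finset ι} (hJM : Disjoint J M) (ht : t ⊆ J) (hu : u ⊆ M) :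
    ptl r (J ∪ M) (t ∪ u) = ptl r J t ⊓ ptl r M u := by
  rw [ptl, Finset.inf_union]
  congr 1
  · refine Finset.inf_congr rfl fun j hj => ?_
    have : (j ∈ t ∪ u) ↔ j ∈ t := by
      simp only [Finset.mem_union]
      refine ⟨fun h => h.resolve_right fun h' => ?_, Or.inl⟩
      exact (Finset.disjoint_left.mp hJM hj) (hu h')
    rw [decide_eq_decide.mpr this]
  · refine Finset.inf_congr rfl fun j hj => ?_
    have : (j ∈ t ∪ u) ↔ j ∈ u := by
      simp only [Finset.mem_union]
      refine ⟨fun h => h.resolve_left fun h' => ?_, Or.inr⟩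
      exact (Finset.disjoint_right.mp hJM hj) (ht h')
    rw [decide_eq_decide.mpr this]

lemma sup_ptl_powerset (M : Finset ι) : M.powerset.sup (ptl r M) = ⊤ := by
  induction M using Finset.induction_on with
  | empty => simp [ptl]
  | @insert a M ha ih =>
    rw [Finset.powerset_insert, Finset.sup_union, Finset.sup_image]
    have h1 : ∀ s ∈ M.powerset, ptl r (insert a M) s = (r a)ᶜ ⊓ ptl r M s := by
      intro s hs
      have hs' := Finset.mem_powerset.mp hs
      have has : a ∉ s := fun h => ha (hs' h)
      rw [ptl, Finset.inf_insert]
      congr 1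
      simp [sgn, has]
    have h2 : ∀ s ∈ M.powerset, ptl r (insert a M) (insert a s) = r a ⊓ ptl r M s := by
      intro s hs
      have hs' := Finset.mem_powerset.mp hs
      rw [ptl, Finset.inf_insert]
      congr 1
      · simp [sgn]
      · refine Finset.inf_congr rfl fun j hj => ?_
        have : (j ∈ insert a s) ↔ j ∈ s := by
          simp only [Finset.mem_insert]
          exact ⟨fun h => h.resolve_left fun h' => ha (h' ▸ hj), Or.inr⟩
        rw [decide_eq_decide.mpr this]
    have hcomp : M.powerset.sup (ptl r (insert a M) ∘ insert a)
        = M.powerset.sup fun s => r a ⊓ ptl r M s := Finset.sup_congr rfl h2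
    rw [Finset.sup_congr rfl h1, hcomp,
      ← Finset.sup_inf_distrib_left, ← Finset.sup_inf_distrib_left, ih]
    simp

noncomputable def muJ (r : ι → α) (J : Finset ι) (x : α) : ℝ :=
  (Tset r J x).card / 2 ^ J.card

lemma rep_superset (hR : IsPreRademacher r) {J K : Finset ι} (hJK : J ⊆ K) {x : α}
    (hx : Rep r J x) : Rep r K x ∧ muJ r K x = muJ r J x := by
  classical
  set T := Tset r J x with hT
  set P := (K \ J).powerset with hP
  set S := (T ×ˢ P).image fun p => p.1 ∪ p.2 with hS
  have hTJ : ∀ t ∈ T, t ⊆ J := fun t ht =>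
    Finset.mem_powerset.mp (Finset.mem_of_mem_filter t ht)
  have hdisj : Disjoint J (K \ J) := Finset.disjoint_sdiff
  have hKJ : J ∪ K \ J = K := Finset.union_sdiff_of_subset hJK
  have hSsub : S ⊆ K.powerset := by
    intro s hs
    simp only [hS, Finset.mem_image, Finset.mem_product] at hs
    obtain ⟨⟨t, u⟩, ⟨htT, huP⟩, rfl⟩ := hs
    rw [Finset.mem_powerset]
    exact Finset.union_subset ((hTJ t htT).trans hJK)
      ((Finset.mem_powerset.mp huP).trans Finset.sdiff_subset)
  have key : ∀ t ∈ T, (P.sup fun u => ptl r K (t ∪ u)) = ptl r J t := by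
    intro t htT
    have h : ∀ u ∈ P, ptl r K (t ∪ u) = ptl r J t ⊓ ptl r (K \ J) u := by
      intro u huP
      have h' := ptl_union (r := r) hdisj (hTJ t htT) (Finset.mem_powerset.mp huP)
      rwa [hKJ] at h'
    calc P.sup (fun u => ptl r K (t ∪ u))
        = P.sup fun u => ptl r J t ⊓ ptl r (K \ J) u := Finset.sup_congr rfl h
      _ = ptl r J t ⊓ P.sup (ptl r (K \ J)) := (Finset.sup_inf_distrib_left _ _ _).symm
      _ = ptl r J t := by rw [hP, sup_ptl_powerset, inf_top_eq]
  have hxS : x = S.sup (ptl r K) := by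
    have h1 : S.sup (ptl r K) = (T ×ˢ P).sup fun p => ptl r K (p.1 ∪ p.2) :=
      Finset.sup_image _ _ _
    have h2 : ((T ×ˢ P).sup fun p => ptl r K (p.1 ∪ p.2))
        = T.sup fun t => P.sup fun u => ptl r K (t ∪ u) :=
      Finset.sup_product_left _ _ _
    have h3 : (T.sup fun t => P.sup fun u => ptl r K (t ∪ u)) = T.sup (ptl r J) :=
      Finset.sup_congr rfl key
    rw [h1, h2, h3]
    exact hx
  have hrep : Rep r K x := rep_of_sup hR hSsub hxS
  refine ⟨hrep, ?_⟩
  have hTK : Tset r K x = S := Tset_eq hR hSsub hxS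
  have hinj : Set.InjOn (fun p : Finset ι × Finset ι => p.1 ∪ p.2) ↑(T ×ˢ P) := by
    rintro ⟨t, u⟩ htu ⟨t', u'⟩ htu' heq
    simp only [Finset.coe_product, Set.mem_prod, Finset.mem_coe] at htu htu'
    simp only at heq
    have ht := hTJ t htu.1
    have ht' := hTJ t' htu'.1
    have hu : u ⊆ K \ J := Finset.mem_powerset.mp htu.2
    have hu' : u' ⊆ K \ J := Finset.mem_powerset.mp htu'.2
    have huJ : Disjoint u J := (Finset.disjoint_sdiff.symm).mono_left hu
    have huJ' : Disjoint u' J := (Finset.disjoint_sdiff.symm).mono_left hu'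
    have e1 : t = t' := by
      have h : (t ∪ u) ∩ J = (t' ∪ u') ∩ J := by rw [heq]
      rwa [Finset.union_inter_distrib_right, Finset.union_inter_distrib_right,
        Finset.inter_eq_left.mpr ht, Finset.inter_eq_left.mpr ht',
        Finset.disjoint_iff_inter_eq_empty.mp huJ,
        Finset.disjoint_iff_inter_eq_empty.mp huJ',
        Finset.union_empty, Finset.union_empty] at h
    have e2 : u = u' := by
      have h : (t ∪ u) \ J = (t' ∪ u') \ J := by rw [heq]
      rwa [Finset.union_sdiff_distrib, Finset.union_sdiff_distrib,
        Finset.sdiff_eq_empty_iff_subset.mpr ht,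
        Finset.sdiff_eq_empty_iff_subset.mpr ht',
        Finset.sdiff_eq_self_of_disjoint huJ, Finset.sdiff_eq_self_of_disjoint huJ',
        Finset.empty_union, Finset.empty_union] at h
    exact Prod.ext_iff.mpr ⟨e1, e2⟩
  have hcard : (Tset r K x).card = T.card * 2 ^ (K \ J).card := by
    rw [hTK, hS, Finset.card_image_of_injOn hinj, Finset.card_product, hP,
      Finset.card_powerset]
  have hsum := Finset.card_sdiff_add_card_eq_card hJK
  have hpow : (2 : ℝ) ^ K.card = 2 ^ J.card * 2 ^ (K \ J).card := by
    rw [← pow_add]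
    congr 1
    omega
  rw [muJ, muJ, hcard, hpow]
  push_cast
  have h2 : (2 : ℝ) ^ J.card ≠ 0 := by positivity
  have h3 : (2 : ℝ) ^ (K \ J).card ≠ 0 := by positivity
  field_simp
  ring

open Classical in
noncomputable def mufull (r : ι → α) (x : α) : ℝ :=
  if h : ∃ J, Rep r J x then muJ r h.choose x else 0

lemma mufull_eq (hR : IsPreRademacher r) {J : Finset ι} {x : α} (hx : Rep r J x) :
    mufull r x = muJ r J x := by
  have hex : ∃ J, Rep r J x := ⟨J, hx⟩
  rw [mufull]
  rw [dif_pos hex]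
  have h1 := rep_superset hR (Finset.subset_union_left : hex.choose ⊆ hex.choose ∪ J)
    hex.choose_spec
  have h2 := rep_superset hR (Finset.subset_union_right : J ⊆ hex.choose ∪ J) hx
  rw [← h1.2, h2.2]

lemma rep_bot (hR : IsPreRademacher r) (J : Finset ι) : Rep r J (⊥ : α) := by
  have : Tset r J (⊥ : α) = ∅ := by
    rw [Finset.eq_empty_iff_forall_notMem]
    intro s hs
    exact ptl_ne_bot hR J s (le_bot_iff.mp (mem_Tset.mp hs).2)
  rw [Rep, this, Finset.sup_empty]

lemma rep_top (hR : IsPreRademacher r) (J : Finset ι) : Rep r J (⊤ : α) :=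
  rep_of_sup hR (subset_refl _) (sup_ptl_powerset J).symm

lemma rep_self (hR : IsPreRademacher r) (i : ι) : Rep r {i} (r i) := by
  have h1 : ptl r {i} {i} = r i := by
    rw [ptl, Finset.inf_singleton]
    simp [sgn]
  refine rep_of_sup hR (T := {{i}}) ?_ ?_
  · intro s hs
    simp only [Finset.mem_singleton] at hs
    simp [hs]
  · rw [Finset.sup_singleton, h1]

lemma rep_sup (hR : IsPreRademacher r) {J : Finset ι} {x y : α}
    (hx : Rep r J x) (hy : Rep r J y) : Rep r J (x ⊔ y) := by
  refine rep_of_sup hR (T := Tset r J x ∪ Tset r J y) ?_ ?_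
  · exact Finset.union_subset Tset_subset Tset_subset
  · rw [Finset.sup_union, ← hx, ← hy]

lemma rep_compl (hR : IsPreRademacher r) {J : Finset ι} {x : α}
    (hx : Rep r J x) : Rep r J xᶜ := by
  classical
  set A := Tset r J x with hA
  set B := J.powerset \ A with hB
  have hAp : A ⊆ J.powerset := Tset_subset
  have hcompl : IsCompl x (B.sup (ptl r J)) := by
    constructor
    · rw [disjoint_iff]
      rw [hx]
      rw [← le_bot_iff]
      rw [Finset.sup_inf_distrib_right]
      refine Finset.sup_le fun s hsA => ?_
      rw [Finset.sup_inf_distrib_left]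
      refine Finset.sup_le fun t htB => ?_
      have hst : s ≠ t := fun h => (Finset.mem_sdiff.mp htB).2 (h ▸ hsA)
      exact (disjoint_iff.mp (ptl_disjoint hR (Finset.mem_powerset.mp (hAp hsA))
        (Finset.mem_powerset.mp (Finset.mem_sdiff.mp htB).1) hst)).le
    · rw [codisjoint_iff]
      rw [hx, ← Finset.sup_union, Finset.union_sdiff_of_subset hAp, sup_ptl_powerset]
  refine rep_of_sup hR (T := B) (Finset.sdiff_subset) ?_
  exact hcompl.compl_eq ▸ rfl

/-- The generated subalgebra is a subalgebra. -/
lemma isSubalg_gen (R : Set α) : IsSubalg (genSubalg R) := by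
  refine ⟨?_, ?_, ?_, ?_, ?_⟩
  · exact fun S hS => hS.1.1
  · exact fun S hS => hS.1.2.1
  · exact fun x hx S hS => hS.1.2.2.1 x (hx S hS)
  · exact fun x hx y hy S hS => hS.1.2.2.2.1 x (hx S hS) y (hy S hS)
  · exact fun x hx y hy S hS => hS.1.2.2.2.2 x (hx S hS) y (hy S hS)

lemma range_sub_gen (R : Set α) : R ⊆ genSubalg R := fun x hx S hS => hS.2 hx

lemma ptl_mem_gen (J s : Finset ι) : ptl r J s ∈ genSubalg (Set.range r) := by
  obtain ⟨h0, h1, hc, hsup, hinf⟩ := isSubalg_gen (Set.range r)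
  refine Finset.inf_mem _ h1 hinf _ _ fun j hj => ?_
  have hr : r j ∈ genSubalg (Set.range r) := range_sub_gen _ ⟨j, rfl⟩
  cases h : decide (j ∈ s) <;> simp only [sgn, Bool.false_eq_true, if_false, if_true]
  · exact hc _ hr
  · exact hr

lemma sup_ptl_mem_gen (J : Finset ι) (T : Finset (Finset ι)) :
    T.sup (ptl r J) ∈ genSubalg (Set.range r) := by
  obtain ⟨h0, h1, hc, hsup, hinf⟩ := isSubalg_gen (Set.range r)
  exact Finset.sup_mem _ h0 hsup _ _ fun s _ => ptl_mem_gen J s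

lemma gen_sub_rep (hR : IsPreRademacher r) :
    genSubalg (Set.range r) ⊆ {x : α | ∃ J, Rep r J x} := by
  refine Set.sInter_subset_of_mem ⟨⟨⟨∅, rep_bot hR ∅⟩, ⟨∅, rep_top hR ∅⟩, ?_, ?_, ?_⟩, ?_⟩
  · rintro x ⟨J, hx⟩
    exact ⟨J, rep_compl hR hx⟩
  · rintro x ⟨J, hx⟩ y ⟨J', hy⟩
    exact ⟨J ∪ J', rep_sup hR (rep_superset hR Finset.subset_union_left hx).1
      (rep_superset hR Finset.subset_union_right hy).1⟩
  · rintro x ⟨J, hx⟩ y ⟨J', hy⟩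
    have hx' := (rep_superset hR (Finset.subset_union_left : J ⊆ J ∪ J') hx).1
    have hy' := (rep_superset hR (Finset.subset_union_right : J' ⊆ J ∪ J') hy).1
    have : x ⊓ y = (xᶜ ⊔ yᶜ)ᶜ := by rw [compl_sup, compl_compl, compl_compl]
    exact ⟨J ∪ J', this ▸ rep_compl hR (rep_sup hR (rep_compl hR hx') (rep_compl hR hy'))⟩
  · rintro _ ⟨i, rfl⟩
    exact ⟨{i}, rep_self hR i⟩

lemma Tset_bot (hR : IsPreRademacher r) (J : Finset ι) : Tset r J (⊥ : α) = ∅ := by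
  rw [Finset.eq_empty_iff_forall_notMem]
  intro s hs
  exact ptl_ne_bot hR J s (le_bot_iff.mp (mem_Tset.mp hs).2)

lemma mufull_bot (hR : IsPreRademacher r) : mufull r (⊥ : α) = 0 := by
  rw [mufull_eq hR (rep_bot hR ∅), muJ, Tset_bot hR]
  simp

lemma mufull_mem_Icc (hR : IsPreRademacher r) {J : Finset ι} {x : α} (hx : Rep r J x) :
    mufull r x ∈ Set.Icc (0 : ℝ) 1 := by
  rw [mufull_eq hR hx, muJ, Set.mem_Icc]
  have h : (Tset r J x).card ≤ 2 ^ J.card := by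
    have h := Finset.card_le_card (Tset_subset (r := r) (J := J) (x := x))
    rwa [Finset.card_powerset] at h
  have hcard : ((Tset r J x).card : ℝ) ≤ 2 ^ J.card := by exact_mod_cast h
  constructor
  · positivity
  · rw [div_le_one (by positivity)]
    exact hcard

lemma Tset_sup_of_disjoint (hR : IsPreRademacher r) {J : Finset ι} {x y : α}
    (hx : Rep r J x) (hy : Rep r J y) :
    Tset r J (x ⊔ y) = Tset r J x ∪ Tset r J y := by
  refine Tset_eq hR (Finset.union_subset Tset_subset Tset_subset) ?_
  rw [Finset.sup_union, ← hx, ← hy]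

lemma mufull_add (hR : IsPreRademacher r) {J : Finset ι} {x y : α}
    (hx : Rep r J x) (hy : Rep r J y) (hxy : Disjoint x y) :
    mufull r (x ⊔ y) = mufull r x + mufull r y := by
  have hTd : Disjoint (Tset r J x) (Tset r J y) := by
    rw [Finset.disjoint_left]
    intro s hsx hsy
    exact ptl_ne_bot hR J s (le_bot_iff.mp (le_inf (mem_Tset.mp hsx).2 (mem_Tset.mp hsy).2
      |>.trans (disjoint_iff.mp hxy).le))
  rw [mufull_eq hR (rep_sup hR hx hy), mufull_eq hR hx, mufull_eq hR hy, muJ, muJ, muJ,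
    Tset_sup_of_disjoint hR hx hy, Finset.card_union_of_disjoint hTd]
  push_cast
  ring

lemma inf_sgn_eq_ptl (J : Finset ι) (θ : ι → Bool) :
    (J.inf fun j => sgn (θ j) (r j)) = ptl r J (J.filter fun j => θ j) := by
  refine Finset.inf_congr rfl fun j hj => ?_
  have : decide (j ∈ J.filter fun j => θ j) = θ j := by
    rcases h : θ j with _ | _ <;> simp [Finset.mem_filter, hj, h]
  rw [this]

lemma Tset_ptl (hR : IsPreRademacher r) {J s : Finset ι} (hs : s ⊆ J) :
    Tset r J (ptl r J s) = {s} := by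
  refine Tset_eq hR ?_ ?_
  · intro t ht
    simp only [Finset.mem_singleton] at ht
    simp [ht, Finset.mem_powerset, hs]
  · rw [Finset.sup_singleton]

lemma mufull_ptl (hR : IsPreRademacher r) {J s : Finset ι} (hs : s ⊆ J) :
    mufull r (ptl r J s) = (1 / 2 : ℝ) ^ J.card := by
  have hrep : Rep r J (ptl r J s) := by
    rw [Rep, Tset_ptl hR hs, Finset.sup_singleton]
  rw [mufull_eq hR hrep, muJ, Tset_ptl hR hs]
  rw [div_pow, one_pow, Finset.card_singleton]
  push_cast
  ring

lemma mufull_isDyadic (hR : IsPreRademacher r) : IsDyadicFAMeasure r (mufull r) := by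
  refine ⟨?_, mufull_bot hR, ?_, ?_⟩
  · intro x hx
    obtain ⟨J, hJ⟩ := gen_sub_rep hR hx
    exact mufull_mem_Icc hR hJ
  · intro a ha b hb hab
    obtain ⟨J, hJ⟩ := gen_sub_rep hR ha
    obtain ⟨J', hJ'⟩ := gen_sub_rep hR hb
    exact mufull_add hR (rep_superset hR (Finset.subset_union_left : J ⊆ J ∪ J') hJ).1
      (rep_superset hR (Finset.subset_union_right : J' ⊆ J ∪ J') hJ').1 hab
  · intro J θ
    rw [inf_sgn_eq_ptl, mufull_ptl hR (Finset.filter_subset _ _)]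

lemma mu_sup_ptl (hR : IsPreRademacher r) {μ : α → ℝ} (hμ : IsDyadicFAMeasure r μ)
    {J : Finset ι} {T : Finset (Finset ι)} (hT : T ⊆ J.powerset) :
    μ (T.sup (ptl r J)) = T.card * (1 / 2 : ℝ) ^ J.card := by
  classical
  induction T using Finset.induction_on with
  | empty => simp [hμ.2.1]
  | @insert s T hsT ih =>
    have hsJ : s ⊆ J := Finset.mem_powerset.mp (hT (Finset.mem_insert_self s T))
    have hT' : T ⊆ J.powerset := fun t ht => hT (Finset.mem_insert_of_mem ht)
    have hdisj : Disjoint (ptl r J s) (T.sup (ptl r J)) := by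
      rw [Finset.disjoint_sup_right]
      intro t ht
      exact ptl_disjoint hR hsJ (Finset.mem_powerset.mp (hT' ht))
        (fun h => hsT (h ▸ ht))
    have hμs : μ (ptl r J s) = (1 / 2 : ℝ) ^ J.card := hμ.2.2.2 J fun j => decide (j ∈ s)
    rw [Finset.sup_insert, hμ.2.2.1 _ (ptl_mem_gen J s) _ (sup_ptl_mem_gen J T) hdisj,
      hμs, ih hT', Finset.card_insert_of_notMem hsT]
    push_cast
    ring

end Rade

/-- Existence and uniqueness (on `𝓑(𝓡)`) of the dyadic finitely additive measure. -/
theorem stmt5 {α ι : Type*} [BooleanAlgebra α] (r : ι → α) (hR : IsPreRademacher r) :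
    (∃ μ : α → ℝ, IsDyadicFAMeasure r μ) ∧
    (∀ μ₁ μ₂ : α → ℝ, IsDyadicFAMeasure r μ₁ → IsDyadicFAMeasure r μ₂ →
      ∀ x ∈ genSubalg (Set.range r), μ₁ x = μ₂ x) := by
  classical
  constructor
  · exact ⟨Rade.mufull r, Rade.mufull_isDyadic hR⟩
  · intro μ₁ μ₂ h₁ h₂ x hx
    obtain ⟨J, hJ⟩ := Rade.gen_sub_rep hR hx
    rw [hJ, Rade.mu_sup_ptl hR h₁ Rade.Tset_subset,
      Rade.mu_sup_ptl hR h₂ Rade.Tset_subset]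
end

section
/- There exists a measurable set $r_0 \subseteq [0,1)$ of Lebesgue measure $\gamma$, for any prescribed $\gamma \in (0,1)$, such that both $r_0$ and $[0,1)\setminus r_0$ intersect every dyadic interval $[\frac{k-1}{2^n},\frac{k}{2^n})$ in a set of positive Lebesgue measure. -/
open MeasureTheory

open Set MeasureTheory Filter
open scoped ENNReal
open scoped Classical

namespace St9

/-- end position of block `j` -/
def tb (j : ℕ) : ℕ := j*j + j

lemma tb_succ (j : ℕ) : tb (j+1) = tb j + 2*(j+1) := by unfold tb; ring

lemma tb_mono : Monotone tb := by
  intro a b h; unfold tb; nlinarith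

/-- the set of `x` whose (base-2) digits at positions `e-L+1 .. e` are all 1 -/
def etaSet (e L : ℕ) : Set ℝ := {x | ⌊x * 2^e⌋₊ % 2^L = 2^L - 1}

lemma measurable_etaSet (e L : ℕ) : MeasurableSet (etaSet e L) := by
  have h : Measurable fun x : ℝ => ⌊x * 2^e⌋₊ :=
    Nat.measurable_floor.comp (measurable_id.mul_const _)
  have h2 : Measurable fun x : ℝ => ⌊x * 2^e⌋₊ % 2^L :=
    (measurable_from_nat (f := fun n : ℕ => n % 2^L)).comp h
  exact h2 (MeasurableSet.singleton _)

noncomputable def B (j : ℕ) (x : ℝ) : ℤ :=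
  (if x ∈ etaSet (j*j) j then 1 else 0) - (if x ∈ etaSet (j*j+j) j then 1 else 0)

lemma B_le (j : ℕ) (x : ℝ) : B j x ≤ 1 := by unfold B; split <;> split <;> omega
lemma neg_le_B (j : ℕ) (x : ℝ) : -1 ≤ B j x := by unfold B; split <;> split <;> omega

lemma measurable_B (j : ℕ) : Measurable (B j) := by
  unfold B
  exact Measurable.sub
    (Measurable.ite (measurable_etaSet _ _) measurable_const measurable_const)
    (Measurable.ite (measurable_etaSet _ _) measurable_const measurable_const)

noncomputable def P (J : ℕ) (x : ℝ) : ℤ := ∑ j ∈ Finset.range (J+1), B j x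

lemma measurable_P (J : ℕ) : Measurable (P J) := by
  unfold P; exact Finset.measurable_sum _ fun j _ => measurable_B j

def E (m : ℤ) : Set ℝ := Ico 0 1 ∩ {x | ∃ M, ∀ J ≥ M, m ≤ P J x}

lemma measurable_E (m : ℤ) : MeasurableSet (E m) := by
  apply (measurableSet_Ico).inter
  have : {x : ℝ | ∃ M, ∀ J ≥ M, m ≤ P J x} = ⋃ M : ℕ, ⋂ J : ℕ, ⋂ _ : J ≥ M, {x | m ≤ P J x} := by
    ext x; simp
  rw [this]
  exact MeasurableSet.iUnion fun M => MeasurableSet.iInter fun J => MeasurableSet.iInter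
    fun _ => (measurable_P J) measurableSet_Ici

lemma E_antitone : Antitone E := by
  intro a b h x hx
  exact ⟨hx.1, hx.2.imp fun M hM J hJ => le_trans h (hM J hJ)⟩

lemma E_subset (m : ℤ) : E m ⊆ Ico 0 1 := fun x hx => hx.1




lemma floor_of_mem {N q : ℕ} {x : ℝ} (h : x ∈ Ico ((N:ℝ)/2^q) ((N+1)/2^q)) :
    ⌊x * 2^q⌋₊ = N := by
  have h2 : (0:ℝ) < 2^q := by positivity
  rw [Nat.floor_eq_iff]
  · constructor
    · calc (N:ℝ) = N/2^q * 2^q := by field_simp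
      _ ≤ x * 2^q := by apply mul_le_mul_of_nonneg_right h.1 h2.le
    · calc x * 2^q < (N+1)/2^q * 2^q := by apply mul_lt_mul_of_pos_right h.2 h2
      _ = N+1 := by field_simp
  · have : (0:ℝ) ≤ (N:ℝ)/2^q := by positivity
    nlinarith [h.1]

lemma floor_scale {x : ℝ} (hx : 0 ≤ x) {e q : ℕ} (h : e ≤ q) :
    ⌊x * 2^e⌋₊ = ⌊x * 2^q⌋₊ / 2^(q-e) := by
  have h2 : x * 2^e = (x * 2^q) / ((2^(q-e) : ℕ) : ℝ) := by
    push_cast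
    rw [pow_sub₀ (2:ℝ) (by norm_num) h]
    field_simp
  rw [h2, Nat.floor_div_natCast]

lemma half_pow (q : ℕ) : ENNReal.ofReal ((2:ℝ)^q)⁻¹ = (2:ℝ≥0∞)⁻¹^q := by
  rw [ENNReal.ofReal_inv_of_pos (by positivity), ENNReal.ofReal_pow (by norm_num : (0:ℝ) ≤ 2),
    ENNReal.inv_pow]
  norm_num

lemma vol_dyadic (N q : ℕ) : volume (Ico ((N:ℝ)/2^q) ((N+1)/2^q)) = (2:ℝ≥0∞)⁻¹^q := by
  rw [Real.volume_Ico, ← half_pow]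
  congr 1
  rw [div_sub_div_same]
  ring_nf

lemma natpart {N u p L q : ℕ} (h : p + L ≤ q) (hmod : N % 2^L = 2^L - 1)
    (hl : u * 2^(q-p) ≤ N) (hu : N < (u+1) * 2^(q-p)) :
    ∃ r < 2^(q-p-L), N = u * 2^(q-p) + r * 2^L + (2^L - 1) := by
  have hL : (0:ℕ) < 2^L := Nat.pow_pos (by norm_num)
  have hsplit : 2^(q-p) = 2^(q-p-L) * 2^L := by
    rw [← pow_add]; congr 1; omega
  set D := N / 2^L with hD
  have hN : 2^L * D + (2^L - 1) = N := by
    rw [hD, ← hmod]; exact Nat.div_add_mod N (2^L)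
  have hDl : u * 2^(q-p-L) ≤ D := by
    rw [hD, Nat.le_div_iff_mul_le hL, mul_assoc, ← hsplit]; exact hl
  have hDu : D < (u+1) * 2^(q-p-L) := by
    rw [hD, Nat.div_lt_iff_lt_mul hL, mul_assoc, ← hsplit]; exact hu
  have hx : (u+1) * 2^(q-p-L) = u * 2^(q-p-L) + 2^(q-p-L) := by ring
  refine ⟨D - u * 2^(q-p-L), by omega, ?_⟩
  have : u * 2^(q-p) + (D - u * 2^(q-p-L)) * 2^L = 2^L * D := by
    rw [hsplit, Nat.sub_mul]
    have h1 : u * (2^(q-p-L) * 2^L) = u * 2^(q-p-L) * 2^L := by ring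
    have h2 : u * 2^(q-p-L) * 2^L ≤ D * 2^L := Nat.mul_le_mul_right _ hDl
    have h3 : 2^L * D = D * 2^L := by ring
    omega
  omega

lemma count (p L q u : ℕ) (h : p + L ≤ q) :
    volume (Ico ((u:ℝ)/2^p) ((u+1)/2^p) ∩ etaSet q L) ≤ (2:ℝ≥0∞)⁻¹^(p+L) := by
  have hq2 : (0:ℝ) < 2^q := by positivity
  have hsub : Ico ((u:ℝ)/2^p) ((u+1)/2^p) ∩ etaSet q L ⊆
      ⋃ r ∈ Finset.range (2^(q-p-L)),
        Ico (((u * 2^(q-p) + r * 2^L + (2^L - 1) : ℕ):ℝ)/2^q)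
            ((((u * 2^(q-p) + r * 2^L + (2^L - 1) : ℕ):ℝ) + 1)/2^q) := by
    rintro x ⟨hxI, hxe⟩
    have hx0 : (0:ℝ) ≤ x := le_trans (by positivity) hxI.1
    set N := ⌊x * 2^q⌋₊ with hNdef
    have hfl : (N:ℝ) ≤ x * 2^q := Nat.floor_le (by positivity)
    have hfu : x * 2^q < N + 1 := Nat.lt_floor_add_one _
    have hNl : u * 2^(q-p) ≤ N := by
      rw [hNdef]
      apply Nat.le_floor
      push_cast
      rw [pow_sub₀ (2:ℝ) (by norm_num) (le_trans (Nat.le_add_right p L) h)]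
      calc (u:ℝ) * (2^q / 2^p) = u / 2^p * 2^q := by ring
      _ ≤ x * 2^q := mul_le_mul_of_nonneg_right hxI.1 hq2.le
    have hNu : N < (u+1) * 2^(q-p) := by
      rw [hNdef]
      apply Nat.floor_lt (by positivity) |>.mpr
      push_cast
      rw [pow_sub₀ (2:ℝ) (by norm_num) (le_trans (Nat.le_add_right p L) h)]
      calc x * 2^q < (u+1) / 2^p * 2^q := mul_lt_mul_of_pos_right hxI.2 hq2
      _ = (u+1) * (2^q / 2^p) := by ring
    obtain ⟨r, hr, hNeq⟩ := natpart h hxe hNl hNu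
    refine mem_biUnion (Finset.mem_range.mpr hr) ?_
    rw [← hNeq]
    constructor
    · rw [div_le_iff₀ hq2]; linarith
    · rw [lt_div_iff₀ hq2]; linarith
  calc volume _ ≤ volume (⋃ r ∈ Finset.range (2^(q-p-L)),
        Ico (((u * 2^(q-p) + r * 2^L + (2^L - 1) : ℕ):ℝ)/2^q)
            ((((u * 2^(q-p) + r * 2^L + (2^L - 1) : ℕ):ℝ) + 1)/2^q)) := measure_mono hsub
  _ ≤ ∑ r ∈ Finset.range (2^(q-p-L)), volume (Ico (((u * 2^(q-p) + r * 2^L + (2^L - 1) : ℕ):ℝ)/2^q)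
            ((((u * 2^(q-p) + r * 2^L + (2^L - 1) : ℕ):ℝ) + 1)/2^q)) := measure_biUnion_finset_le _ _
  _ = ∑ r ∈ Finset.range (2^(q-p-L)), (2:ℝ≥0∞)⁻¹^q := by
      exact Finset.sum_congr rfl fun r _ => vol_dyadic _ q
  _ = (2^(q-p-L) : ℕ) * (2:ℝ≥0∞)⁻¹^q := by
      rw [Finset.sum_const, Finset.card_range, nsmul_eq_mul]
  _ = (2:ℝ≥0∞)⁻¹^(p+L) := by
      push_cast
      obtain ⟨a, ha⟩ : ∃ a, q - p - L = a := ⟨_, rfl⟩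
      rw [ha, show q = a + (p+L) by omega, pow_add, ← mul_assoc, ← mul_pow,
        ENNReal.mul_inv_cancel (by norm_num) (by norm_num), one_pow, one_mul]


def app (s : Bool) (j : ℕ) : ℕ := if s then (2^j - 1)*2^j else 2^j - 1

lemma app_lt (s : Bool) (j : ℕ) : app s j < 2^(2*j) := by
  have h : 0 < (2:ℕ)^j := Nat.pow_pos (by norm_num)
  have h2 : (2:ℕ)^(2*j) = 2^j * 2^j := by rw [two_mul, pow_add]
  unfold app; split
  · rw [h2]; exact mul_lt_mul_of_pos_right (by omega) h
  · have h3 : (2:ℕ)^j ≤ 2^(2*j) := Nat.pow_le_pow_right (by norm_num) (by omega)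
    omega

def Npat (k n J₀ : ℕ) (s : Bool) : ℕ → ℕ
  | 0 => (k-1) * 2^(tb J₀ - n)
  | (i+1) => Npat k n J₀ s i * 2^(2*(J₀+i+1)) + app s (J₀+i+1)

lemma div_helper (A b : ℕ) {S t : ℕ} (hb : b < 2^S) (hSt : S ≤ t) :
    (A * 2^S + b) / 2^t = A / 2^(t-S) := by
  have h2 : (2:ℕ)^t = 2^S * 2^(t-S) := by rw [← pow_add]; congr 1; omega
  rw [h2, ← Nat.div_div_eq_div_mul]
  congr 1
  rw [add_comm, Nat.add_mul_div_right _ _ (Nat.pow_pos (by norm_num)),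
    Nat.div_eq_of_lt hb, zero_add]

section
variable (k n J₀ : ℕ) (s : Bool)

lemma Npat_zero : Npat k n J₀ s 0 = (k-1) * 2^(tb J₀ - n) := rfl
lemma Npat_succ (i : ℕ) :
    Npat k n J₀ s (i+1) = Npat k n J₀ s i * 2^(2*(J₀+i+1)) + app s (J₀+i+1) := rfl

lemma Npat_bounds (hk : 1 ≤ k) (hn : n ≤ tb J₀) (i : ℕ) :
    (k-1) * 2^(tb (J₀+i) - n) ≤ Npat k n J₀ s i ∧ Npat k n J₀ s i < k * 2^(tb (J₀+i) - n) := by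
  induction i with
  | zero =>
    rw [Nat.add_zero, Npat_zero]
    exact ⟨le_refl _,
      mul_lt_mul_of_pos_right (by omega) (Nat.pow_pos (by norm_num))⟩
  | succ i ih =>
    simp only [← Nat.add_assoc] at *
    have hn' : n ≤ tb (J₀+i) := le_trans hn (tb_mono (Nat.le_add_right _ _))
    have hexp2 : tb (J₀+i+1) - n = (tb (J₀+i) - n) + 2*(J₀+i+1) := by
      have := tb_succ (J₀+i); omega
    have hpow : (2:ℕ)^(tb (J₀+i+1) - n) = 2^(tb (J₀+i) - n) * 2^(2*(J₀+i+1)) := by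
      rw [hexp2, pow_add]
    rw [Npat_succ]
    constructor
    · calc (k-1) * 2^(tb (J₀+i+1) - n) = (k-1) * 2^(tb (J₀+i) - n) * 2^(2*(J₀+i+1)) := by
            rw [hpow]; ring
      _ ≤ Npat k n J₀ s i * 2^(2*(J₀+i+1)) := Nat.mul_le_mul_right _ ih.1
      _ ≤ _ := Nat.le_add_right _ _
    · calc Npat k n J₀ s i * 2^(2*(J₀+i+1)) + app s (J₀+i+1)
          < Npat k n J₀ s i * 2^(2*(J₀+i+1)) + 2^(2*(J₀+i+1)) :=
            Nat.add_lt_add_left (app_lt s _) _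
      _ = (Npat k n J₀ s i + 1) * 2^(2*(J₀+i+1)) := by ring
      _ ≤ k * 2^(tb (J₀+i) - n) * 2^(2*(J₀+i+1)) := Nat.mul_le_mul_right _ (by omega)
      _ = k * 2^(tb (J₀+i+1) - n) := by rw [hpow]; ring

lemma Npat_digits (i j : ℕ) (h1 : J₀+1 ≤ j) (h2 : j ≤ J₀+i) :
    (Npat k n J₀ s i) / 2^(tb (J₀+i) - j*j) % 2^j = (if s then 2^j - 1 else 0) ∧
    (Npat k n J₀ s i) / 2^(tb (J₀+i) - (j*j+j)) % 2^j = (if s then 0 else 2^j - 1) := by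
  induction i with
  | zero => omega
  | succ i ih =>
    simp only [← Nat.add_assoc] at *
    have hj2 : (0:ℕ) < 2^j := Nat.pow_pos (by norm_num)
    have htbj : tb j = j*j + j := rfl
    rcases Nat.lt_or_ge j (J₀+i+1) with hc | hc
    · -- j ≤ J₀ + i : reduce to ih
      have hle : j ≤ J₀ + i := by omega
      have hetb : tb j ≤ tb (J₀+i) := tb_mono hle
      have key : ∀ e : ℕ, e ≤ tb (J₀+i) →
          Npat k n J₀ s (i+1) / 2^(tb (J₀+i+1) - e) = Npat k n J₀ s i / 2^(tb (J₀+i) - e) := by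
        intro e he
        have ht := tb_succ (J₀+i)
        have hS : 2*(J₀+i+1) ≤ tb (J₀+i+1) - e := by omega
        have hE : tb (J₀+i+1) - e - 2*(J₀+i+1) = tb (J₀+i) - e := by omega
        rw [Npat_succ, div_helper _ _ (app_lt s _) hS, hE]
      constructor
      · rw [key (j*j) (by omega)]; exact (ih hle).1
      · rw [key (j*j+j) (by omega)]; exact (ih hle).2
    · -- j = J₀ + i + 1
      have hj : j = J₀ + i + 1 := by omega
      have htb : tb (J₀+i+1) = j*j + j := by rw [← hj]; exact htbj
      have he1 : tb (J₀+i+1) - j*j = j := by omega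
      have he2 : tb (J₀+i+1) - (j*j+j) = 0 := by omega
      have hpow2 : (2:ℕ)^(2*j) = 2^j * 2^j := by rw [two_mul, pow_add]
      have hNdef : Npat k n J₀ s (i+1) = Npat k n J₀ s i * 2^(2*j) + app s j := by
        rw [Npat_succ, hj]
      rw [he1, he2, hNdef, pow_zero, Nat.div_one]
      cases s with
      | true =>
        have happ : app true j = (2^j - 1)*2^j := rfl
        have hfact : Npat k n J₀ true i * 2^(2*j) + app true j
            = (Npat k n J₀ true i * 2^j + (2^j - 1)) * 2^j := by
          rw [happ, hpow2]; ring
        constructor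
        · rw [hfact, Nat.mul_div_cancel _ hj2, Nat.mul_add_mod', Nat.mod_eq_of_lt (by omega)]
          simp
        · rw [hfact, Nat.mul_mod_left]
          simp
      | false =>
        have happ : app false j = 2^j - 1 := rfl
        have hsplit : Npat k n J₀ false i * 2^(2*j) + (2^j - 1)
            = (Npat k n J₀ false i * 2^j) * 2^j + (2^j-1) := by
          rw [hpow2]; ring
        constructor
        · rw [happ, hsplit, div_helper _ _ (by omega) (le_refl j), Nat.sub_self, pow_zero,
            Nat.div_one, Nat.mul_mod_left]
          simp
        · rw [happ, hsplit, Nat.mul_add_mod', Nat.mod_eq_of_lt (by omega)]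
          simp
end

lemma force (n k : ℕ) (hk : 1 ≤ k) (m : ℤ) (s : Bool) :
    ∃ F : Set ℝ, F ⊆ Ico (((k:ℝ)-1)/2^n) ((k:ℝ)/2^n) ∧ 0 < volume F ∧
      ∀ x ∈ F, ∃ (v : ℤ) (M : ℕ), (if s then m ≤ v else v < m) ∧ ∀ J ≥ M, P J x = v := by
  classical
  set J₀ : ℕ := n + 3 with hJ₀
  have hn : n ≤ tb J₀ := by rw [hJ₀]; unfold tb; nlinarith
  set K : ℕ := m.natAbs + J₀ + 2 with hK
  set M : ℕ := J₀ + K with hM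
  set Q : ℕ := tb M with hQ
  set N : ℕ := Npat k n J₀ s K with hN
  set C : Set ℝ := Ico ((N:ℝ)/2^Q) ((N+1)/2^Q) with hC
  set Sb : ℕ → Set ℝ := fun j => C ∩ (etaSet (j*j) j ∪ etaSet (j*j+j) j) with hSb
  set Bad : Set ℝ := ⋃ i : ℕ, Sb (M+1+i) with hBad
  have hQn : n ≤ Q := le_trans hn (tb_mono (by omega))
  refine ⟨C \ Bad, ?_, ?_, ?_⟩
  · -- C \ Bad ⊆ I
    have hb := Npat_bounds k n J₀ s hk hn K
    rw [← hM, ← hQ, ← hN] at hb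
    have h2Q : (0:ℝ) < 2^Q := by positivity
    have h2n : (0:ℝ) < 2^n := by positivity
    have hpow : (2:ℝ)^(Q-n) = 2^Q / 2^n := pow_sub₀ (2:ℝ) (by norm_num) hQn
    have hcast : ((k:ℝ) - 1) = ((k-1 : ℕ) : ℝ) := by
      rw [Nat.cast_sub hk]; norm_num
    intro x hx
    replace hx : x ∈ C := hx.1
    constructor
    · refine le_trans ?_ hx.1
      rw [div_le_div_iff₀ h2n h2Q, hcast]
      calc ((k-1:ℕ):ℝ) * 2^Q = ((k-1:ℕ):ℝ) * (2^(Q-n) * 2^n) := by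
            rw [hpow]; field_simp
      _ = (((k-1) * 2^(Q-n) : ℕ) : ℝ) * 2^n := by push_cast; ring
      _ ≤ (N:ℝ) * 2^n :=
            mul_le_mul_of_nonneg_right (Nat.cast_le.mpr hb.1) h2n.le
    · refine lt_of_lt_of_le hx.2 ?_
      rw [div_le_div_iff₀ h2Q h2n]
      calc ((N:ℝ)+1) * 2^n ≤ ((k * 2^(Q-n) : ℕ):ℝ) * 2^n := by
            have h1 : ((N:ℝ)+1) ≤ ((k * 2^(Q-n) : ℕ):ℝ) := by
              exact_mod_cast Nat.cast_le.mpr hb.2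
            exact mul_le_mul_of_nonneg_right h1 h2n.le
      _ = (k:ℝ) * (2^(Q-n) * 2^n) := by push_cast; ring
      _ = (k:ℝ) * 2^Q := by rw [hpow]; field_simp
  · -- positive volume
    have hvC : volume C = (2:ℝ≥0∞)⁻¹^Q := vol_dyadic N Q
    have h21 : (2:ℝ≥0∞) * 2⁻¹ = 1 := ENNReal.mul_inv_cancel (by norm_num) (by norm_num)
    have hSbb : ∀ i : ℕ, volume (Sb (M+1+i)) ≤ 2 * (2:ℝ≥0∞)⁻¹^(Q+M+1) * 2⁻¹^i := by
      intro i
      have hcond1 : Q + (M+1+i) ≤ (M+1+i)*(M+1+i) := by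
        have h2 : Q = M*M + M := rfl
        nlinarith
      have hcond2 : Q + (M+1+i) ≤ (M+1+i)*(M+1+i) + (M+1+i) := by omega
      have hu1 := count Q (M+1+i) ((M+1+i)*(M+1+i)) N hcond1
      have hu2 := count Q (M+1+i) ((M+1+i)*(M+1+i)+(M+1+i)) N hcond2
      calc volume (Sb (M+1+i))
          ≤ volume (C ∩ etaSet ((M+1+i)*(M+1+i)) (M+1+i))
            + volume (C ∩ etaSet ((M+1+i)*(M+1+i)+(M+1+i)) (M+1+i)) := by
            rw [hSb]
            simp only [inter_union_distrib_left]
            exact measure_union_le _ _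
      _ ≤ (2:ℝ≥0∞)⁻¹^(Q+(M+1+i)) + (2:ℝ≥0∞)⁻¹^(Q+(M+1+i)) := add_le_add hu1 hu2
      _ = 2 * (2:ℝ≥0∞)⁻¹^(Q+(M+1+i)) := (two_mul _).symm
      _ = 2 * (2:ℝ≥0∞)⁻¹^(Q+M+1) * 2⁻¹^i := by
            rw [show Q + (M+1+i) = (Q+M+1) + i by omega, pow_add, mul_assoc]
    have hBadle : volume Bad ≤ (2:ℝ≥0∞)⁻¹^Q * 2⁻¹ := by
      calc volume Bad ≤ ∑' i : ℕ, volume (Sb (M+1+i)) := measure_iUnion_le _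
      _ ≤ ∑' i : ℕ, 2 * (2:ℝ≥0∞)⁻¹^(Q+M+1) * 2⁻¹^i := ENNReal.tsum_le_tsum hSbb
      _ = 2 * (2:ℝ≥0∞)⁻¹^(Q+M+1) * ∑' i : ℕ, (2:ℝ≥0∞)⁻¹^i := ENNReal.tsum_mul_left
      _ = 2 * (2:ℝ≥0∞)⁻¹^(Q+M+1) * 2 := by
            rw [ENNReal.tsum_geometric, ENNReal.one_sub_inv_two, inv_inv]
      _ ≤ 2 * ((2:ℝ≥0∞)⁻¹^(Q+3)) * 2 := by
            have hp : (2:ℝ≥0∞)⁻¹^(Q+M+1) ≤ 2⁻¹^(Q+3) :=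
              pow_le_pow_right_of_le_one' (by norm_num : (2:ℝ≥0∞)⁻¹ ≤ 1) (by omega)
            exact mul_le_mul' (mul_le_mul' (le_refl (2:ℝ≥0∞)) hp) (le_refl (2:ℝ≥0∞))
      _ = (2:ℝ≥0∞)⁻¹^Q * 2⁻¹ := by
            calc 2 * ((2:ℝ≥0∞)⁻¹^(Q+3)) * 2
                = ((2:ℝ≥0∞)*2⁻¹) * ((2:ℝ≥0∞)*2⁻¹) * (2⁻¹^Q * 2⁻¹) := by ring
            _ = (2:ℝ≥0∞)⁻¹^Q * 2⁻¹ := by rw [h21]; ring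
    rw [pos_iff_ne_zero]
    intro h0
    have hsub : C ⊆ (C \ Bad) ∪ Bad := fun y hy => by
      by_cases h : y ∈ Bad
      exacts [Or.inr h, Or.inl ⟨hy, h⟩]
    have hle : volume C ≤ volume (C \ Bad) + volume Bad :=
      le_trans (measure_mono hsub) (measure_union_le _ _)
    rw [hvC, h0, zero_add] at hle
    have hle2 : (2:ℝ≥0∞)⁻¹^Q ≤ 2⁻¹^Q * 2⁻¹ := le_trans hle hBadle
    have hne0 : (2:ℝ≥0∞)⁻¹^Q ≠ 0 := pow_ne_zero _ (by norm_num)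
    have hnetop : (2:ℝ≥0∞)⁻¹^Q ≠ ∞ := ENNReal.pow_ne_top (by norm_num)
    nth_rewrite 1 [← mul_one ((2:ℝ≥0∞)⁻¹^Q)] at hle2
    rw [ENNReal.mul_le_mul_iff_right hne0 hnetop] at hle2
    norm_num at hle2
  · -- pointwise behaviour
    rintro x ⟨hxC, hxB⟩
    have hx0 : (0:ℝ) ≤ x :=
      le_trans (div_nonneg (Nat.cast_nonneg N) (by positivity)) hxC.1
    have hfl : ∀ e, e ≤ Q → ⌊x*2^e⌋₊ = N / 2^(Q-e) := by
      intro e he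
      rw [floor_scale hx0 he, floor_of_mem hxC]
    have hd := Npat_digits k n J₀ s K
    rw [← hM, ← hQ, ← hN] at hd
    have hBj : ∀ j, J₀+1 ≤ j → j ≤ M → B j x = (if s then 1 else -1) := by
      intro j h1 h2
      have hdj := hd j h1 h2
      have he1 : x ∈ etaSet (j*j) j ↔ N / 2^(Q - j*j) % 2^j = 2^j - 1 := by
        rw [etaSet, mem_setOf_eq, hfl (j*j) (le_trans (by unfold tb; omega : j*j ≤ tb j) (tb_mono h2))]
      have he2 : x ∈ etaSet (j*j+j) j ↔ N / 2^(Q - (j*j+j)) % 2^j = 2^j - 1 := by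
        rw [etaSet, mem_setOf_eq, hfl (j*j+j) (le_trans (le_of_eq rfl) (tb_mono h2))]
      have hj1 : (1:ℕ) ≤ 2^j - 1 := by
        have : (2:ℕ)^1 ≤ 2^j := Nat.pow_le_pow_right (by norm_num) (by omega)
        omega
      cases s with
      | true =>
        have hin : x ∈ etaSet (j*j) j := he1.mpr (hdj.1.trans (if_pos rfl))
        have hout : x ∉ etaSet (j*j+j) j := by
          rw [he2, hdj.2, if_pos rfl]
          omega
        simp only [B, if_pos hin, if_neg hout]
        norm_num
      | false =>
        have hout : x ∉ etaSet (j*j) j := by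
          rw [he1, hdj.1, if_neg (by simp)]
          omega
        have hin : x ∈ etaSet (j*j+j) j := he2.mpr (hdj.2.trans (if_neg (by simp)))
        simp only [B, if_pos hin, if_neg hout]
        norm_num
    have hB0 : ∀ j, M+1 ≤ j → B j x = 0 := by
      intro j hj
      have hxS : x ∉ Sb j := by
        intro hmem
        apply hxB
        rw [hBad]
        refine mem_iUnion.mpr ⟨j - (M+1), ?_⟩
        rwa [show M+1+(j-(M+1)) = j by omega]
      rw [hSb] at hxS
      simp only [mem_inter_iff, mem_union, not_and, not_or] at hxS
      obtain ⟨hne1, hne2⟩ := hxS hxC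
      simp only [B, if_neg hne1, if_neg hne2]
      norm_num
    refine ⟨P M x, M, ?_, ?_⟩
    · -- bound on v
      have hsplit : P M x = (∑ j ∈ Finset.Ico 0 (J₀+1), B j x)
          + ∑ j ∈ Finset.Ico (J₀+1) (M+1), B j x := by
        simp only [P, Finset.range_eq_Ico]
        rw [← Finset.sum_Ico_consecutive (fun j => B j x) (Nat.zero_le (J₀+1))
            (by omega : J₀+1 ≤ M+1)]
      have hcard1 : (Finset.Ico 0 (J₀+1)).card = J₀+1 := by simp
      have hcard2 : (Finset.Ico (J₀+1) (M+1)).card = K := by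
        rw [Nat.card_Ico]; omega
      have hsum2 : ∑ j ∈ Finset.Ico (J₀+1) (M+1), B j x = (if s then (K:ℤ) else -(K:ℤ)) := by
        have e1 : ∑ j ∈ Finset.Ico (J₀+1) (M+1), B j x
            = ∑ _j ∈ Finset.Ico (J₀+1) (M+1), (if s then (1:ℤ) else -1) :=
          Finset.sum_congr rfl fun j hj => by
            rw [Finset.mem_Ico] at hj
            exact hBj j hj.1 (by omega)
        rw [e1, Finset.sum_const, hcard2]
        cases s <;> simp
      have hKval : (K:ℤ) = m.natAbs + J₀ + 2 := by rw [hK]; push_cast; ring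
      cases s with
      | true =>
        have hsum1 : -((J₀:ℤ)+1) ≤ ∑ j ∈ Finset.Ico 0 (J₀+1), B j x := by
          have h := Finset.card_nsmul_le_sum (Finset.Ico 0 (J₀+1)) (fun j => B j x) (-1)
            (fun j _ => neg_le_B j x)
          rw [hcard1] at h
          simpa using h
        rw [if_pos rfl]
        rw [hsplit, hsum2, if_pos rfl]
        have hm : m ≤ (m.natAbs:ℤ) := Int.le_natAbs
        omega
      | false =>
        have hsum1 : ∑ j ∈ Finset.Ico 0 (J₀+1), B j x ≤ ((J₀:ℤ)+1) := by
          have h := Finset.sum_le_card_nsmul (Finset.Ico 0 (J₀+1)) (fun j => B j x) 1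
            (fun j _ => B_le j x)
          rw [hcard1] at h
          simpa using h
        rw [if_neg (by simp)]
        rw [hsplit, hsum2, if_neg (by simp)]
        omega
    · -- eventual constancy
      intro J hJ
      have hz : ∑ j ∈ Finset.Ico (M+1) (J+1), B j x = 0 :=
        Finset.sum_eq_zero fun j hj => hB0 j (Finset.mem_Ico.mp hj).1
      have hsp : P J x = P M x + ∑ j ∈ Finset.Ico (M+1) (J+1), B j x := by
        simp only [P, Finset.range_eq_Ico]
        rw [Finset.sum_Ico_consecutive (fun j => B j x) (Nat.zero_le (M+1))
            (by omega : M+1 ≤ J+1)]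
      rw [hsp, hz, add_zero]
lemma I_subset (n k : ℕ) (hk : 1 ≤ k) (hk2 : k ≤ 2^n) :
    Ico (((k:ℝ)-1)/2^n) ((k:ℝ)/2^n) ⊆ Ico (0:ℝ) 1 := by
  have h2n : (0:ℝ) < 2^n := by positivity
  intro x hx
  constructor
  · refine le_trans ?_ hx.1
    apply div_nonneg _ h2n.le
    have : (1:ℝ) ≤ (k:ℝ) := by exact_mod_cast hk
    linarith
  · refine lt_of_lt_of_le hx.2 ?_
    rw [div_le_one h2n]
    exact_mod_cast hk2

def SS (j : ℕ) : Set ℝ := Ico (0:ℝ) 1 ∩ (etaSet (j*j) j ∪ etaSet (j*j+j) j)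

lemma vol_SS (j : ℕ) : volume (SS j) ≤ 2 * (2:ℝ≥0∞)⁻¹^j := by
  have hIco : Ico (0:ℝ) 1 = Ico (((0:ℕ):ℝ)/2^0) ((((0:ℕ):ℝ)+1)/2^0) := by norm_num
  have hjj : (0:ℕ) + j ≤ j*j ∨ j = 0 := by
    rcases Nat.eq_zero_or_pos j with h | h
    · right; exact h
    · left; nlinarith
  rcases hjj with hjj | rfl
  · have hu1 := count 0 j (j*j) 0 hjj
    have hu2 := count 0 j (j*j+j) 0 (by omega)
    calc volume (SS j) ≤ volume (Ico (((0:ℕ):ℝ)/2^0) ((((0:ℕ):ℝ)+1)/2^0) ∩ etaSet (j*j) j)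
          + volume (Ico (((0:ℕ):ℝ)/2^0) ((((0:ℕ):ℝ)+1)/2^0) ∩ etaSet (j*j+j) j) := by
          rw [SS, hIco]
          simp only [inter_union_distrib_left]
          exact measure_union_le _ _
    _ ≤ (2:ℝ≥0∞)⁻¹^(0+j) + (2:ℝ≥0∞)⁻¹^(0+j) := add_le_add hu1 hu2
    _ = 2 * (2:ℝ≥0∞)⁻¹^j := by rw [Nat.zero_add, two_mul]
  · calc volume (SS 0) ≤ volume (Ico (0:ℝ) 1) := measure_mono inter_subset_left
    _ = 1 := by rw [Real.volume_Ico]; norm_num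
    _ ≤ 2 * (2:ℝ≥0∞)⁻¹^0 := by norm_num

lemma vol_limsup : volume (Filter.limsup SS atTop) = 0 := by
  apply measure_limsup_atTop_eq_zero
  have h1 : ∑' j, volume (SS j) ≤ ∑' j : ℕ, 2 * (2:ℝ≥0∞)⁻¹^j := ENNReal.tsum_le_tsum vol_SS
  have h2 : ∑' j : ℕ, 2 * (2:ℝ≥0∞)⁻¹^j = 2 * 2 := by
    rw [ENNReal.tsum_mul_left, ENNReal.tsum_geometric, ENNReal.one_sub_inv_two, inv_inv]
  exact ne_top_of_le_ne_top (by rw [h2]; norm_num) h1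

lemma eventually_const {x : ℝ} (hx01 : x ∈ Ico (0:ℝ) 1) (hx : x ∉ Filter.limsup SS atTop) :
    ∃ M : ℕ, ∀ J ≥ M, P J x = P M x := by
  rw [mem_limsup_iff_frequently_mem, Filter.not_frequently, Filter.eventually_atTop] at hx
  obtain ⟨M, hM⟩ := hx
  have hB0 : ∀ j, M ≤ j → B j x = 0 := by
    intro j hj
    have := hM j hj
    rw [SS] at this
    simp only [mem_inter_iff, mem_union, not_and, not_or] at this
    obtain ⟨h1, h2⟩ := this hx01
    simp only [B, if_neg h1, if_neg h2]
    norm_num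
  refine ⟨M, fun J hJ => ?_⟩
  have hz : ∑ j ∈ Finset.Ico (M+1) (J+1), B j x = 0 :=
    Finset.sum_eq_zero fun j hj => hB0 j (by have := (Finset.mem_Ico.mp hj).1; omega)
  have hsp : P J x = P M x + ∑ j ∈ Finset.Ico (M+1) (J+1), B j x := by
    simp only [P, Finset.range_eq_Ico]
    rw [Finset.sum_Ico_consecutive (fun j => B j x) (Nat.zero_le (M+1))
        (by omega : M+1 ≤ J+1)]
  rw [hsp, hz, add_zero]

lemma vol_Ico01 : volume (Ico (0:ℝ) 1) = 1 := by rw [Real.volume_Ico]; norm_num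

lemma vol_E_le (m : ℤ) : volume (E m) ≤ 1 :=
  le_trans (measure_mono (E_subset m)) (le_of_eq vol_Ico01)

lemma E_iInter : (⋂ i : ℕ, E (i:ℤ)) ⊆ Filter.limsup SS atTop := by
  intro x hx
  by_contra hnot
  have hx0 : x ∈ E 0 := by simpa using mem_iInter.mp hx 0
  obtain ⟨M, hM⟩ := eventually_const hx0.1 hnot
  set v : ℤ := P M x with hv
  have hx2 : x ∈ E ((v+1).toNat : ℤ) := mem_iInter.mp hx (v+1).toNat
  obtain ⟨M₂, hM₂⟩ := hx2.2
  have h1 := hM (max M M₂) (le_max_left _ _)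
  have h2 := hM₂ (max M M₂) (le_max_right _ _)
  rw [h1] at h2
  have h3 : v + 1 ≤ ((v+1).toNat : ℤ) := Int.self_le_toNat _
  omega

lemma E_iUnion : Ico (0:ℝ) 1 \ Filter.limsup SS atTop ⊆ ⋃ i : ℕ, E (-(i:ℤ)) := by
  rintro x ⟨hx01, hnot⟩
  obtain ⟨M, hM⟩ := eventually_const hx01 hnot
  set v : ℤ := P M x with hv
  refine mem_iUnion.mpr ⟨(-v).toNat, hx01, M, fun J hJ => ?_⟩
  rw [hM J hJ]
  have := Int.self_le_toNat (-v)
  omega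

lemma exists_threshold (γ' : ℝ≥0∞) (h0 : 0 < γ') (h1 : γ' < 1) :
    ∃ m : ℤ, γ' < volume (E m) ∧ volume (E (m+1)) ≤ γ' := by
  classical
  have hanti : Antitone (fun i : ℕ => E (i:ℤ)) := fun a b hab =>
    E_antitone (by exact_mod_cast hab)
  have htop := tendsto_measure_iInter_atTop (μ := volume)
      (fun i => (measurable_E _).nullMeasurableSet) hanti
      ⟨0, ne_top_of_le_ne_top (by norm_num) (vol_E_le 0)⟩
  have hz : volume (⋂ i : ℕ, E (i:ℤ)) = 0 :=
    le_antisymm (le_trans (measure_mono E_iInter) (le_of_eq vol_limsup)) zero_le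
  rw [hz] at htop
  obtain ⟨i₂, hi₂⟩ := (htop.eventually_lt_const h0).exists
  have hmono : Monotone (fun i : ℕ => E (-(i:ℤ))) := fun a b hab =>
    E_antitone (neg_le_neg (by exact_mod_cast hab))
  have hbot := tendsto_measure_iUnion_atTop (μ := volume) hmono
  have hone : (1:ℝ≥0∞) ≤ volume (⋃ i : ℕ, E (-(i:ℤ))) := by
    calc (1:ℝ≥0∞) = volume (Ico (0:ℝ) 1 \ Filter.limsup SS atTop) := by
          rw [measure_diff_null vol_limsup, vol_Ico01]
    _ ≤ _ := measure_mono E_iUnion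
  obtain ⟨i₁, hi₁⟩ := (hbot.eventually_const_lt (lt_of_lt_of_le h1 hone)).exists
  simp only [Function.comp] at hi₁ hi₂
  set f : ℕ → ℝ≥0∞ := fun i => volume (E (-(i₁:ℤ) + i)) with hf
  have hf0 : γ' < f 0 := by
    have : (-(i₁:ℤ) + (0:ℕ)) = -(i₁:ℤ) := by push_cast; ring
    rw [hf]; simpa [this] using hi₁
  have hfe : f (i₁ + i₂) ≤ γ' := by
    have h : (-(i₁:ℤ) + ((i₁ + i₂ : ℕ):ℤ)) = (i₂:ℤ) := by push_cast; ring
    rw [hf]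
    simpa [h] using hi₂.le
  have hS : ∃ i, f (i+1) ≤ γ' := by
    rcases Nat.eq_zero_or_pos (i₁+i₂) with h | h
    · rw [h] at hfe; exact absurd hfe (not_le.mpr hf0)
    · exact ⟨i₁+i₂-1, by rwa [Nat.sub_add_cancel h]⟩
  set i₀ := Nat.find hS with hi₀
  have h₀1 : f (i₀+1) ≤ γ' := Nat.find_spec hS
  have h₀2 : γ' < f i₀ := by
    rcases Nat.eq_zero_or_pos i₀ with h | h
    · rw [h]; exact hf0
    · have hmin := Nat.find_min hS (show i₀ - 1 < i₀ by omega)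
      rw [Nat.sub_add_cancel h] at hmin
      exact not_le.mp hmin
  refine ⟨-(i₁:ℤ) + i₀, h₀2, ?_⟩
  have h : (-(i₁:ℤ) + i₀) + 1 = -(i₁:ℤ) + ((i₀+1:ℕ):ℤ) := by push_cast; ring
  rw [h]
  exact h₀1

lemma exists_r0 (γ : ℝ) (hγ : γ ∈ Ioo (0:ℝ) 1) :
    ∃ (r0 : Set ℝ) (m : ℤ), MeasurableSet r0 ∧ r0 ⊆ Ico (0:ℝ) 1 ∧
      volume r0 = ENNReal.ofReal γ ∧ E (m+1) ⊆ r0 ∧ r0 ⊆ E m := by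
  obtain ⟨m, hm1, hm2⟩ := exists_threshold (ENNReal.ofReal γ)
    (ENNReal.ofReal_pos.mpr hγ.1) (ENNReal.ofReal_lt_one.mpr hγ.2)
  set D : Set ℝ := E m \ E (m+1) with hD
  have hsub : E (m+1) ⊆ E m := E_antitone (by omega)
  have hDm : MeasurableSet D := (measurable_E m).diff (measurable_E (m+1))
  have hfinE : ∀ m' : ℤ, volume (E m') ≠ ∞ := fun m' =>
    ne_top_of_le_ne_top (by norm_num) (vol_E_le m')
  have hfin : ∀ t : ℝ, volume (D ∩ Ico 0 t) ≠ ∞ := fun t =>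
    ne_top_of_le_ne_top (hfinE m) (measure_mono (fun y hy => hy.1.1))
  set ψ : ℝ → ℝ := fun t => (volume (D ∩ Ico 0 t)).toReal with hψ
  have key : ∀ t u : ℝ, t ≤ u → ψ t ≤ ψ u ∧ ψ u ≤ ψ t + (u - t) := by
    intro t u htu
    constructor
    · exact ENNReal.toReal_mono (hfin u)
        (measure_mono (inter_subset_inter_right _ (Ico_subset_Ico_right htu)))
    · have hss : D ∩ Ico 0 u ⊆ (D ∩ Ico 0 t) ∪ Ico t u := by
        rintro y ⟨hyD, hy0, hyu⟩
        rcases lt_or_ge y t with h | h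
        · exact Or.inl ⟨hyD, hy0, h⟩
        · exact Or.inr ⟨h, hyu⟩
      have hle : volume (D ∩ Ico 0 u) ≤ volume (D ∩ Ico 0 t) + ENNReal.ofReal (u - t) := by
        refine le_trans (measure_mono hss) ?_
        refine le_trans (measure_union_le _ _) ?_
        rw [Real.volume_Ico]
      have := ENNReal.toReal_mono (by
          exact ENNReal.add_ne_top.mpr ⟨hfin t, ENNReal.ofReal_ne_top⟩) hle
      rwa [ENNReal.toReal_add (hfin t) ENNReal.ofReal_ne_top,
        ENNReal.toReal_ofReal (by linarith)] at this
  have hcont : Continuous ψ := by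
    refine (LipschitzWith.of_dist_le_mul (K := 1) fun t u => ?_).continuous
    rw [NNReal.coe_one, one_mul, Real.dist_eq, Real.dist_eq]
    rcases le_total t u with h | h
    · obtain ⟨h1, h2⟩ := key t u h
      rw [abs_sub_comm, abs_of_nonneg (by linarith), abs_of_nonpos (by linarith)]
      linarith
    · obtain ⟨h1, h2⟩ := key u t h
      rw [abs_of_nonneg (by linarith), abs_of_nonneg (by linarith)]
      linarith
  have hψ0 : ψ 0 = 0 := by
    rw [hψ]; simp
  have hDIco : D ∩ Ico (0:ℝ) 1 = D :=
    inter_eq_left.mpr (fun y hy => E_subset m hy.1)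
  have hvolD : volume D = volume (E m) - volume (E (m+1)) :=
    measure_diff hsub (measurable_E (m+1)).nullMeasurableSet (hfinE (m+1))
  have hγle : γ ≤ (volume (E m)).toReal := by
    have := ENNReal.toReal_mono (hfinE m) hm1.le
    rwa [ENNReal.toReal_ofReal hγ.1.le] at this
  have hτ0 : 0 ≤ γ - (volume (E (m+1))).toReal := by
    have := ENNReal.toReal_mono ENNReal.ofReal_ne_top hm2
    rw [ENNReal.toReal_ofReal hγ.1.le] at this
    linarith
  have hψ1 : γ - (volume (E (m+1))).toReal ≤ ψ 1 := by
    rw [hψ]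
    simp only [hDIco]
    rw [hvolD, ENNReal.toReal_sub_of_le (measure_mono hsub) (hfinE m)]
    linarith
  have hIVT := intermediate_value_Icc (by norm_num : (0:ℝ) ≤ 1) hcont.continuousOn
  obtain ⟨t, _, hψt⟩ := hIVT ⟨by rw [hψ0]; exact hτ0, hψ1⟩
  refine ⟨E (m+1) ∪ (D ∩ Ico 0 t), m, ?_, ?_, ?_, subset_union_left, ?_⟩
  · exact (measurable_E (m+1)).union (hDm.inter measurableSet_Ico)
  · exact union_subset (E_subset (m+1)) (fun y hy => E_subset m hy.1.1)
  · have hdisj : Disjoint (E (m+1)) (D ∩ Ico 0 t) :=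
      disjoint_sdiff_self_right.mono_right inter_subset_left
    rw [measure_union hdisj (hDm.inter measurableSet_Ico)]
    have h1 : volume (D ∩ Ico 0 t) = ENNReal.ofReal (γ - (volume (E (m+1))).toReal) := by
      rw [← hψt, hψ, ENNReal.ofReal_toReal (hfin t)]
    have h2 : volume (E (m+1)) = ENNReal.ofReal ((volume (E (m+1))).toReal) :=
      (ENNReal.ofReal_toReal (hfinE (m+1))).symm
    rw [h1]
    nth_rewrite 1 [h2]
    rw [← ENNReal.ofReal_add ENNReal.toReal_nonneg hτ0]
    congr 1
    ring
  · exact union_subset hsub (fun y hy => hy.1.1)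

end St9


/-- For every `γ ∈ (0,1)` there is a Borel subset `r₀` of `[0,1)` of Lebesgue measure
`γ` such that both `r₀` and its complement in `[0,1)` meet every dyadic interval
`[(k-1)/2ⁿ, k/2ⁿ)` (with `1 ≤ k ≤ 2ⁿ`) in a set of positive measure. -/
theorem stmt9 (γ : ℝ) (hγ : γ ∈ Set.Ioo (0 : ℝ) 1) :
    ∃ r0 : Set ℝ, MeasurableSet r0 ∧ r0 ⊆ Set.Ico (0 : ℝ) 1 ∧
      volume r0 = ENNReal.ofReal γ ∧
      ∀ n k : ℕ, 1 ≤ k → k ≤ 2 ^ n →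
        0 < volume (Set.Ico (((k : ℝ) - 1) / 2 ^ n) ((k : ℝ) / 2 ^ n) ∩ r0) ∧
        0 < volume (Set.Ico (((k : ℝ) - 1) / 2 ^ n) ((k : ℝ) / 2 ^ n) ∩
          (Set.Ico (0 : ℝ) 1 \ r0)) := by
  obtain ⟨r0, m, hmeas, hsub01, hvol, hlow, hhigh⟩ := St9.exists_r0 γ hγ
  refine ⟨r0, hmeas, hsub01, hvol, fun n k hk hk2 => ?_⟩
  constructor
  · obtain ⟨F, hFI, hFpos, hF⟩ := St9.force n k hk (m+1) true
    refine lt_of_lt_of_le hFpos (measure_mono ?_)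
    intro x hx
    refine ⟨hFI hx, ?_⟩
    obtain ⟨v, M, hv, hc⟩ := hF x hx
    have hv' : m+1 ≤ v := by simpa using hv
    apply hlow
    exact ⟨St9.I_subset n k hk hk2 (hFI hx), M, fun J hJ => by rw [hc J hJ]; exact hv'⟩
  · obtain ⟨F, hFI, hFpos, hF⟩ := St9.force n k hk m false
    refine lt_of_lt_of_le hFpos (measure_mono ?_)
    intro x hx
    refine ⟨hFI hx, St9.I_subset n k hk hk2 (hFI hx), ?_⟩
    intro hxr
    obtain ⟨v, M, hv, hc⟩ := hF x hx
    have hv' : v < m := by simpa using hv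
    obtain ⟨M₂, hM₂⟩ := (hhigh hxr).2
    have h1 := hc (max M M₂) (le_max_left _ _)
    have h2 := hM₂ (max M M₂) (le_max_right _ _)
    omega
end

section
/- Every pre-Rademacher family vanishing at infinity in a Boolean algebra is hereditarily atomless. -/
/-- A family vanishes at infinity if for every infinite `J ⊆ I` and all signs,
`⊥` is the infimum of `{θⱼ rⱼ : j ∈ J}`, i.e. every lower bound is `⊥`. -/
def VanishesAtInfinity {α ι : Type*} [BooleanAlgebra α] (r : ι → α) : Prop :=
  ∀ J : Set ι, J.Infinite → ∀ θ : ι → Bool, ∀ x : α,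
    (∀ j ∈ J, x ≤ sgn (θ j) (r j)) → x = ⊥

/-- A family is hereditarily atomless if for every infinite subfamily the smallest
order closed subalgebra it generates is atomless. -/
def HereditarilyAtomless {α ι : Type*} [BooleanAlgebra α] (r : ι → α) : Prop :=
  ∀ J : Set ι, J.Infinite → ∀ a : α, ¬ IsAtomIn (tauSubalg (r '' J)) a

/-- Every pre-Rademacher family vanishing at infinity is hereditarily atomless. -/
theorem stmt12 {α ι : Type*} [BooleanAlgebra α] [Infinite ι]
    (r : ι → α) (hR : IsPreRademacher r) (hv : VanishesAtInfinity r) :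
    HereditarilyAtomless r := by
  intro J hJ a ha
  obtain ⟨haS, hane, hmin⟩ := ha
  set S := tauSubalg (r '' J) with hS
  -- S contains r '' J
  have hRS : r '' J ⊆ S := by
    intro x hx
    intro T hT
    exact hT.2.2 hx
  -- S is closed under ⊓
  have hinf : ∀ x ∈ S, ∀ y ∈ S, x ⊓ y ∈ S := by
    intro x hx y hy T hT
    exact hT.1.2.2.2.2 x (hx T hT) y (hy T hT)
  classical
  set θ : ι → Bool := fun j => decide (a ≤ r j) with hθ
  have key : ∀ j ∈ J, a ≤ sgn (θ j) (r j) := by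
    intro j hj
    by_cases hle : a ≤ r j
    · simp [hθ, sgn, hle]
    · have hr : r j ∈ S := hRS ⟨j, hj, rfl⟩
      have := hmin (a ⊓ r j) (hinf a haS (r j) hr) inf_le_left
      rcases this with hbot | heq
      · have : Disjoint a (r j) := disjoint_iff.mpr hbot
        simp only [hθ, sgn, hle, decide_eq_true_eq, if_neg]
        exact this.le_compl_right
      · exact absurd (le_of_inf_eq heq) hle
  exact hane (hv J hJ θ a key)
end

section
/- Let $(r_i)_{i\in I}$ be an infinite family of elements of a Boolean algebra $\mathcal{B}$ dominated by an element $e$ (i.e., $r_i \le e$ for all $i$). Then $(r_i)_{i\in I}$ is a pre-Rademacher family in $\mathcal{B}$ if and only if it is a pre-Rademacher family on $e$, i.e., a pre-Rademacher family in the relative Boolean algebra $\mathcal{B}_e = \{x\in\mathcal{B} : x \le e\}$ with unit $e$ (in which the complement of $x$ is $e\setminus x$). -/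
/-- A pre-Rademacher family on an element `e`: a family of distinct elements all of
whose finite particles computed in the relative algebra `𝓑_e = {x : x ≤ e}`
(with unit `e` and complement `e \ x`) are nonzero. -/
def IsPreRademacherOn {α ι : Type*} [BooleanAlgebra α] (e : α) (r : ι → α) : Prop :=
  Function.Injective r ∧
    ∀ (J : Finset ι) (θ : ι → Bool),
      e ⊓ (J.inf fun j => if θ j then r j else e \ r j) ≠ ⊥

/-- An infinite family dominated by `e` is pre-Rademacher in `𝓑` iff it is
pre-Rademacher on `e`. -/
theorem stmt13 {α ι : Type*} [BooleanAlgebra α] [Infinite ι]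
    (e : α) (r : ι → α) (hle : ∀ i, r i ≤ e) :
    IsPreRademacher r ↔ IsPreRademacherOn e r := by
  classical
  constructor
  · rintro ⟨hinj, hp⟩
    refine ⟨hinj, fun J θ hbot => ?_⟩
    obtain ⟨i, hi⟩ := Infinite.exists_notMem_finset J
    set θ' := Function.update θ i true with hθ'
    have key : (insert i J).inf (fun j => sgn (θ' j) (r j)) ≤
        e ⊓ (J.inf fun j => if θ j then r j else e \ r j) := by
      rw [Finset.inf_insert]
      have h1 : sgn (θ' i) (r i) = r i := by simp [sgn, hθ', Function.update_self]
      have h2 : J.inf (fun j => sgn (θ' j) (r j)) = J.inf (fun j => sgn (θ j) (r j)) := by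
        apply Finset.inf_congr rfl
        intro j hj
        have : j ≠ i := fun h => hi (h ▸ hj)
        simp [hθ', Function.update_of_ne this]
      rw [h1, h2]
      have hE : r i ⊓ J.inf (fun j => sgn (θ j) (r j)) ≤ e :=
        le_trans inf_le_left (hle i)
      refine le_inf hE (Finset.le_inf fun j hj => ?_)
      have hJ : r i ⊓ J.inf (fun j => sgn (θ j) (r j)) ≤ sgn (θ j) (r j) :=
        le_trans inf_le_right (Finset.inf_le hj)
      by_cases h : θ j
      · simpa [sgn, h] using hJ
      · rw [if_neg h, sdiff_eq]
        exact le_inf hE (by simpa [sgn, h] using hJ)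
    have : (insert i J).inf (fun j => sgn (θ' j) (r j)) = ⊥ :=
      le_bot_iff.mp (hbot ▸ key)
    exact hp _ θ' this
  · rintro ⟨hinj, hp⟩
    refine ⟨hinj, fun J θ hbot => ?_⟩
    apply hp J θ
    refine le_bot_iff.mp (le_trans ?_ hbot.le)
    refine le_trans inf_le_right (Finset.le_inf fun j hj => ?_)
    refine le_trans (Finset.inf_le hj) ?_
    by_cases h : θ j <;> simp [sgn, h, sdiff_eq]
end

section
/- Let $\mathcal{B}$ be a Boolean algebra, $e = e' \sqcup e''$ with $e', e'' > \mathbf{0}$, and let $(r'_i)_{i\in I}$ and $(r''_i)_{i\in I}$ be pre-Rademacher families on $e'$ and $e''$ respectively. Define $I_0 = I \cup \{*\}$ for a new index $*$, $r_i = r'_i \sqcup r''_i$ for $i\in I$, and $r_* = e'$. Then $(r_i)_{i\in I_0}$ is a pre-Rademacher family on $e$. If moreover both given families vanish at infinity (on $e'$ and $e''$ respectively), then so does $(r_i)_{i\in I_0}$ on $e$. -/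
/-- A family on `e` vanishes at infinity if every infinite particle (computed in the
relative algebra `𝓑_e`) equals `⊥`, i.e. every lower bound in `𝓑_e` is `⊥`. -/
def VanishesAtInfinityOn {α ι : Type*} [BooleanAlgebra α] (e : α) (r : ι → α) : Prop :=
  ∀ J : Set ι, J.Infinite → ∀ θ : ι → Bool, ∀ x : α, x ≤ e →
    (∀ j ∈ J, x ≤ (if θ j then r j else e \ r j)) → x = ⊥

/-- Gluing two pre-Rademacher families on complementary pieces `e'`, `e''` of `e`,
together with the extra element `r_* = e'`, gives a pre-Rademacher family on `e`;
the vanishing at infinity property is also preserved. -/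
theorem stmt15 {α ι : Type*} [BooleanAlgebra α] (e e' e'' : α)
    (he : e = e' ⊔ e'') (hd : Disjoint e' e'') (he1 : e' ≠ ⊥) (he2 : e'' ≠ ⊥)
    (r' r'' : ι → α) (hle1 : ∀ i, r' i ≤ e') (hle2 : ∀ i, r'' i ≤ e'')
    (h1 : IsPreRademacherOn e' r') (h2 : IsPreRademacherOn e'' r'') :
    IsPreRademacherOn e (fun o : Option ι => o.elim e' fun i => r' i ⊔ r'' i) ∧
    (VanishesAtInfinityOn e' r' → VanishesAtInfinityOn e'' r'' →
      VanishesAtInfinityOn e (fun o : Option ι => o.elim e' fun i => r' i ⊔ r'' i)) := by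
  subst he
  have hd1 : ∀ i, Disjoint (r'' i) e' := fun i => hd.symm.mono_left (hle2 i)
  have hd2 : ∀ i, Disjoint (r' i) e'' := fun i => hd.mono_left (hle1 i)
  have hinf1 : ∀ i, (r' i ⊔ r'' i) ⊓ e' = r' i := by
    intro i
    rw [inf_sup_right, inf_eq_left.mpr (hle1 i), disjoint_iff.mp (hd1 i), sup_bot_eq]
  have hinf2 : ∀ i, (r' i ⊔ r'' i) ⊓ e'' = r'' i := by
    intro i
    rw [inf_sup_right, inf_eq_left.mpr (hle2 i), disjoint_iff.mp (hd2 i), bot_sup_eq]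
  have hr2ne : ∀ i, r'' i ≠ ⊥ := by
    intro i h
    have := h2.2 {i} (fun _ => true)
    simp [h] at this
  -- key inequalities for signed factors
  have key1 : ∀ i (b : Bool),
      (if b then r' i else e' \ r' i) ≤
        (if b then r' i ⊔ r'' i else (e' ⊔ e'') \ (r' i ⊔ r'' i)) := by
    intro i b
    cases b with
    | true => simpa using le_sup_left
    | false =>
      simp only [Bool.false_eq_true, if_false]
      refine le_sdiff.mpr ⟨sdiff_le.trans le_sup_left, disjoint_sup_right.mpr ⟨?_, ?_⟩⟩
      · exact disjoint_sdiff_self_left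
      · exact ((hd1 i).symm.mono_left sdiff_le)
  have key2 : ∀ i (b : Bool),
      (if b then r'' i else e'' \ r'' i) ≤
        (if b then r' i ⊔ r'' i else (e' ⊔ e'') \ (r' i ⊔ r'' i)) := by
    intro i b
    cases b with
    | true => simpa using le_sup_right
    | false =>
      simp only [Bool.false_eq_true, if_false]
      refine le_sdiff.mpr ⟨sdiff_le.trans le_sup_right, disjoint_sup_right.mpr ⟨?_, ?_⟩⟩
      · exact ((hd2 i).symm.mono_left sdiff_le)
      · exact disjoint_sdiff_self_left
  constructor
  · constructor
    · rintro (_ | a) (_ | b) hab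
      · rfl
      · exfalso
        simp only [Option.elim] at hab
        have : e' ⊓ e'' = r'' b := by rw [hab, hinf2]
        exact hr2ne b (this ▸ disjoint_iff.mp hd)
      · exfalso
        simp only [Option.elim] at hab
        have : e' ⊓ e'' = r'' a := by rw [← hab, hinf2]
        exact hr2ne a (this ▸ disjoint_iff.mp hd)
      · simp only [Option.elim] at hab
        have : r' a = r' b := by rw [← hinf1 a, hab, hinf1]
        exact congrArg some (h1.1 this)
    · intro J θ
      by_cases hθ : θ none = true
      · -- use the e' side
        intro hbot
        apply h1.2 J.eraseNone (fun i => θ (some i))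
        rw [← le_bot_iff] at hbot ⊢
        refine le_trans ?_ hbot
        refine le_inf (inf_le_left.trans le_sup_left) (Finset.le_inf ?_)
        rintro (_ | i) ho
        · simp only [Option.elim, hθ, if_pos]
          exact inf_le_left
        · refine le_trans (inf_le_right.trans
            (Finset.inf_le (Finset.mem_eraseNone.mpr ho))) ?_
          simpa using key1 i (θ (some i))
      · intro hbot
        apply h2.2 J.eraseNone (fun i => θ (some i))
        rw [← le_bot_iff] at hbot ⊢
        refine le_trans ?_ hbot
        refine le_inf (inf_le_left.trans le_sup_right) (Finset.le_inf ?_)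
        rintro (_ | i) ho
        · simp only [Option.elim, if_neg hθ]
          exact le_sdiff.mpr ⟨inf_le_left.trans le_sup_right,
            hd.symm.mono_left inf_le_left⟩
        · refine le_trans (inf_le_right.trans
            (Finset.inf_le (Finset.mem_eraseNone.mpr ho))) ?_
          simpa using key2 i (θ (some i))
  · intro hv1 hv2 J hJ θ x hxe hx
    have hJ' : {i | some i ∈ J}.Infinite := by
      by_contra h
      rw [Set.not_infinite] at h
      have hsub : J ⊆ insert none (some '' {i | some i ∈ J}) := by
        rintro (_ | i) ho
        · exact Set.mem_insert _ _
        · exact Set.mem_insert_of_mem _ ⟨i, ho, rfl⟩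
      exact hJ (((h.image _).insert none).subset hsub)
    have hx' : ∀ i, some i ∈ J → x ⊓ e' ≤ (if θ (some i) then r' i else e' \ r' i) ∧
        x ⊓ e'' ≤ (if θ (some i) then r'' i else e'' \ r'' i) := by
      intro i hi
      have h0 := hx (some i) hi
      simp only [Option.elim] at h0
      by_cases hb : θ (some i) = true
      · rw [if_pos hb] at h0
        constructor
        · rw [if_pos hb, ← hinf1 i]
          exact inf_le_inf_right _ h0
        · rw [if_pos hb, ← hinf2 i]
          exact inf_le_inf_right _ h0
      · rw [if_neg hb] at h0
        have hdisj : Disjoint x (r' i ⊔ r'' i) :=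
          disjoint_sdiff_self_left.mono_left h0
        constructor
        · rw [if_neg hb]
          exact le_sdiff.mpr ⟨inf_le_right,
            (hdisj.mono_right le_sup_left).mono_left inf_le_left⟩
        · rw [if_neg hb]
          exact le_sdiff.mpr ⟨inf_le_right,
            (hdisj.mono_right le_sup_right).mono_left inf_le_left⟩
    have hx1 : x ⊓ e' = ⊥ :=
      hv1 {i | some i ∈ J} hJ' (fun i => θ (some i)) (x ⊓ e') inf_le_right
        (fun i hi => (hx' i hi).1)
    have hx2 : x ⊓ e'' = ⊥ :=
      hv2 {i | some i ∈ J} hJ' (fun i => θ (some i)) (x ⊓ e'') inf_le_right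
        (fun i hi => (hx' i hi).2)
    have : x = x ⊓ (e' ⊔ e'') := (inf_eq_left.mpr hxe).symm
    rw [this, inf_sup_left, hx1, hx2, sup_bot_eq]
end

section
/- Let $E$ be a Dedekind $\sigma$-complete Riesz space and $0 < e \in E$. Then for every $x \ge 0$ in the band $B_e$ generated by $e$ there exists an increasing sequence $(u_n)$ of $e$-simple elements with $0 \le x - u_n \le \frac{1}{n} e$ for all $n$ and $u_n \uparrow x$. -/
set_option linter.unusedSectionVars false
set_option maxHeartbeats 1000000

section

variable {E : Type*} [Lattice E] [AddCommGroup E]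
  [CovariantClass E E (· + ·) (· ≤ ·)] [Module ℝ E] [PosSMulMono ℝ E]

/-- `x` is a fragment of `y`: `0 ≤ x ≤ y` and `x ⊓ (y - x) = 0`. -/
def IsFragment (y x : E) : Prop := 0 ≤ x ∧ x ≤ y ∧ x ⊓ (y - x) = 0

/-- A (Riesz) ideal: a solid linear subspace. -/
def IsRieszIdeal (S : Set E) : Prop :=
  (0 : E) ∈ S ∧ (∀ x ∈ S, ∀ y ∈ S, x + y ∈ S) ∧ (∀ c : ℝ, ∀ x ∈ S, c • x ∈ S) ∧
    ∀ x ∈ S, ∀ y : E, |y| ≤ |x| → y ∈ S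

/-- A band: an order closed ideal (closed under all existing suprema of subsets). -/
def IsBandSet (S : Set E) : Prop :=
  IsRieszIdeal S ∧ ∀ C ⊆ S, ∀ b : E, IsLUB C b → b ∈ S

/-- The band generated by `e`: the smallest band containing `e`. -/
def bandGen (e : E) : Set E := ⋂₀ {S : Set E | IsBandSet S ∧ e ∈ S}

/-- An `e`-simple element: an infinite disjoint sum `⊔ₙ aₙ xₙ` of real multiples of
pairwise disjoint fragments of `e`, i.e. `u = supₙ (aₙ xₙ)⁺ - supₙ (aₙ xₙ)⁻` with
both suprema existing. -/
def IsESimple (e u : E) : Prop :=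
  ∃ (a : ℕ → ℝ) (x : ℕ → E) (p q : E),
    (∀ n, IsFragment e (x n)) ∧ (∀ n m, n ≠ m → x n ⊓ x m = 0) ∧
    IsLUB (Set.range fun n => (a n • x n) ⊔ 0) p ∧
    IsLUB (Set.range fun n => (-(a n • x n)) ⊔ 0) q ∧
    u = p - q



lemma frd_sub_inf (a b : E) : a - a ⊓ b = (a - b) ⊔ 0 := by
  rw [sub_eq_add_neg, neg_inf, add_sup, ← sub_eq_add_neg, ← sub_eq_add_neg, sub_self, sup_comm]

lemma frd_smul_right_mono {c d : ℝ} {v : E} (h : c ≤ d) (hv : 0 ≤ v) : c • v ≤ d • v := by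
  have h2 : 0 ≤ (d - c) • v := smul_nonneg (by linarith) hv
  rw [sub_smul, sub_nonneg] at h2; exact h2

lemma frd_posneg (a : E) : (a ⊔ 0) ⊓ ((-a) ⊔ 0) = 0 := by
  have h1 : (-a) ⊔ 0 = (a ⊔ 0) - a := by
    rw [sub_eq_add_neg, sup_add, ← sub_eq_add_neg, sub_self, zero_add, sup_comm]
  have h2 : (a ⊔ 0) ⊓ ((a ⊔ 0) - a) = (a ⊔ 0) + (0 ⊓ (-a)) := by
    rw [add_inf, add_zero, ← sub_eq_add_neg]
  have h3 : (0:E) ⊓ (-a) = -(a ⊔ 0) := by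
    have : -(a ⊔ 0) = (-a) ⊓ (-0) := neg_sup a 0
    rw [this, neg_zero, inf_comm]
  rw [h1, h2, h3]; abel

lemma frd_inf_add {a b c : E} (ha : 0 ≤ a) (hb : 0 ≤ b) (hc : 0 ≤ c) :
    a ⊓ (b + c) ≤ a ⊓ b + a ⊓ c := by
  set d := a ⊓ (b + c) with hd
  have hda : d ≤ a := inf_le_left
  have hdbc : d ≤ b + c := inf_le_right
  have key : d - a ⊓ b = (d - a) ⊔ (d - b) := by
    rw [sub_eq_add_neg, neg_inf, add_sup, ← sub_eq_add_neg, ← sub_eq_add_neg]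
  have h1 : d - a ≤ a := sub_le_iff_le_add.2 (le_trans hda (le_add_of_nonneg_right ha))
  have h2 : d - a ≤ c := sub_le_iff_le_add.2 (le_trans hda (le_add_of_nonneg_left hc))
  have h3 : d - b ≤ a := sub_le_iff_le_add.2 (le_trans hda (le_add_of_nonneg_right hb))
  have h4 : d - b ≤ c := sub_le_iff_le_add.2 (by rw [add_comm]; exact hdbc)
  have h5 : d - a ⊓ b ≤ a ⊓ c := by
    rw [key]; exact sup_le (le_inf h1 h2) (le_inf h3 h4)
  calc d = (d - a ⊓ b) + a ⊓ b := by abel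
  _ ≤ a ⊓ c + a ⊓ b := add_le_add_left h5 _
  _ = a ⊓ b + a ⊓ c := by abel

lemma frd_inf_nsmul {a b : E} (ha : 0 ≤ a) (hb : 0 ≤ b) (h : a ⊓ b = 0) :
    ∀ k : ℕ, a ⊓ (k • b) = 0 := by
  intro k; induction k with
  | zero => simpa using inf_eq_right.2 ha
  | succ n ih =>
    have h1 : a ⊓ (n • b + b) ≤ a ⊓ (n • b) + a ⊓ b := frd_inf_add ha (nsmul_nonneg hb n) hb
    rw [ih, h, add_zero] at h1
    rw [succ_nsmul]
    exact le_antisymm h1 (le_inf ha (add_nonneg (nsmul_nonneg hb n) hb))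

lemma frd_inf_rsmul {a b : E} {c : ℝ} (ha : 0 ≤ a) (hb : 0 ≤ b) (hc : 0 ≤ c)
    (h : a ⊓ b = 0) : a ⊓ (c • b) = 0 := by
  obtain ⟨m, hm⟩ := exists_nat_ge c
  have h1 : c • b ≤ m • b := by
    rw [← Nat.cast_smul_eq_nsmul ℝ m b]; exact frd_smul_right_mono hm hb
  have h2 : a ⊓ (c • b) ≤ a ⊓ (m • b) := inf_le_inf_left a h1
  rw [frd_inf_nsmul ha hb h m] at h2
  exact le_antisymm h2 (le_inf ha (smul_nonneg hc hb))

lemma frd_disj_smul {a b : E} {c d : ℝ} (ha : 0 ≤ a) (hb : 0 ≤ b) (hc : 0 ≤ c)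
    (hd : 0 ≤ d) (h : a ⊓ b = 0) : (c • a) ⊓ (d • b) = 0 := by
  have h1 : b ⊓ (c • a) = 0 := frd_inf_rsmul hb ha hc (by rw [inf_comm]; exact h)
  have h2 : (c • a) ⊓ (d • b) = 0 :=
    frd_inf_rsmul (smul_nonneg hc ha) hb hd (by rw [inf_comm]; exact h1)
  exact h2

lemma frd_isLUB_inf (a : E) {S : Set E} {b : E} (h : IsLUB S b) :
    IsLUB ((fun s => a ⊓ s) '' S) (a ⊓ b) := by
  constructor
  · rintro _ ⟨s, hs, rfl⟩
    exact inf_le_inf_left a (h.1 hs)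
  · intro u hu
    have key : ∀ s ∈ S, s ≤ u + ((b - a) ⊔ 0) := by
      intro s hs
      have h1 : s = a ⊓ s + ((s - a) ⊔ 0) := by
        rw [← frd_sub_inf s a, inf_comm]; abel
      have h2 : (s - a) ⊔ 0 ≤ (b - a) ⊔ 0 :=
        sup_le_sup_right (sub_le_sub_right (h.1 hs) a) 0
      calc s = a ⊓ s + ((s - a) ⊔ 0) := h1
      _ ≤ u + ((b - a) ⊔ 0) := add_le_add (hu ⟨s, hs, rfl⟩) h2
    have hb' : b ≤ u + ((b - a) ⊔ 0) := h.2 key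
    have h6 : b - ((b - a) ⊔ 0) ≤ u := sub_le_iff_le_add.2 hb'
    have heq : b - ((b - a) ⊔ 0) = a ⊓ b := by
      rw [← frd_sub_inf b a, inf_comm]; abel
    rwa [heq] at h6

lemma frd_isLUB_inf_zero {a : E} {f : ℕ → E} {b : E} (h : IsLUB (Set.range f) b)
    (hz : ∀ n, a ⊓ f n = 0) : a ⊓ b = 0 := by
  have h1 := frd_isLUB_inf a h
  have h2 : (fun s => a ⊓ s) '' Set.range f = {0} := by
    apply Set.eq_singleton_iff_nonempty_unique_mem.2
    refine ⟨⟨a ⊓ f 0, ⟨f 0, ⟨0, rfl⟩, rfl⟩⟩, ?_⟩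
    rintro _ ⟨_, ⟨n, rfl⟩, rfl⟩; exact hz n
  rw [h2] at h1
  exact h1.unique isLUB_singleton

lemma frd_arch (hσ : ∀ f : ℕ → E, BddAbove (Set.range f) → ∃ b, IsLUB (Set.range f) b)
    {u c : E} (h : ∀ n : ℕ, n • u ≤ c) : u ≤ 0 := by
  obtain ⟨s, hs⟩ := hσ (fun n : ℕ => n • u) ⟨c, by rintro _ ⟨n, rfl⟩; exact h n⟩
  have h1 : ∀ n : ℕ, n • u ≤ s - u := by
    intro n
    have h2 : (n+1) • u ≤ s := hs.1 ⟨n+1, rfl⟩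
    rw [succ_nsmul] at h2
    exact le_sub_iff_add_le.2 h2
  have h3 : s ≤ s - u := hs.2 (by rintro _ ⟨n, rfl⟩; exact h1 n)
  have := sub_le_iff_le_add.1 (le_of_eq (rfl : s - u = s - u))
  have h4 : s + u ≤ s := by
    have := add_le_add_left h3 u
    rwa [sub_add_cancel] at this
  calc u = s + u - s := by abel
  _ ≤ s - s := sub_le_sub_right h4 s
  _ = 0 := sub_self s

lemma frd_sup_add_le {a : E} (b : E) (ha : 0 ≤ a) : (b + a) ⊔ 0 ≤ (b ⊔ 0) + a := by
  refine sup_le (add_le_add_left le_sup_left a) (add_nonneg le_sup_right ha)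



lemma frd_abs_eq (a : E) : |a| = a ⊔ -a := rfl

lemma frd_abs_nonneg (a : E) : (0:E) ≤ a ⊔ -a := by
  have h1 : (0:E) ≤ (a ⊔ -a) + (a ⊔ -a) := by
    have h0 : a + -a ≤ (a ⊔ -a) + (a ⊔ -a) :=
      add_le_add (le_sup_left : a ≤ a ⊔ -a) (le_sup_right : -a ≤ a ⊔ -a)
    simpa using h0
  have h2 : (a ⊔ -a) + (a ⊔ -a) = (2:ℝ) • (a ⊔ -a) := (two_smul ℝ _).symm
  have h3 : a ⊔ -a = (2:ℝ)⁻¹ • ((2:ℝ) • (a ⊔ -a)) := by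
    rw [smul_smul, inv_mul_cancel₀ (two_ne_zero), one_smul]
  rw [h3, ← h2]
  exact smul_nonneg (by norm_num) h1

lemma frd_C_nonempty {C : Set E} {b e : E} (he : 0 < e) (h : IsLUB C b) : C.Nonempty := by
  by_contra hne
  rw [Set.not_nonempty_iff_eq_empty] at hne
  subst hne
  have h1 : b - e ∈ upperBounds (∅ : Set E) := fun x hx => absurd hx (Set.notMem_empty x)
  have h2 : b ≤ b - e := h.2 h1
  have h3 : b + e ≤ b := by
    have := add_le_add_left h2 e
    rwa [sub_add_cancel] at this
  have : e ≤ 0 := by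
    have := sub_le_sub_right h3 b
    simpa using this
  exact lt_irrefl (0:E) (lt_of_lt_of_le he this)

lemma frd_isLUB_sup0 {C : Set E} {b : E} (hC : C.Nonempty) (h : IsLUB C b) :
    IsLUB ((fun c => c ⊔ 0) '' C) (b ⊔ 0) := by
  constructor
  · rintro _ ⟨c, hc, rfl⟩
    exact sup_le_sup_right (h.1 hc) 0
  · intro u hu
    obtain ⟨c0, hc0⟩ := hC
    have h0 : (0:E) ≤ u := le_trans le_sup_right (hu ⟨c0, hc0, rfl⟩)
    have hb : b ≤ u := h.2 (fun c hc => le_trans le_sup_left (hu ⟨c, hc, rfl⟩))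
    exact sup_le hb h0

lemma frd_isLUB_inf_zero_set {a : E} {S : Set E} {b : E} (hS : S.Nonempty)
    (h : IsLUB S b) (hz : ∀ s ∈ S, a ⊓ s = 0) : a ⊓ b = 0 := by
  have h1 := frd_isLUB_inf a h
  have h2 : (fun s => a ⊓ s) '' S = {0} := by
    apply Set.eq_singleton_iff_nonempty_unique_mem.2
    obtain ⟨s0, hs0⟩ := hS
    refine ⟨⟨a ⊓ s0, ⟨s0, hs0, rfl⟩⟩, ?_⟩
    rintro _ ⟨s, hs, rfl⟩; exact hz s hs
  rw [h2] at h1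
  exact h1.unique isLUB_singleton

lemma frd_T_band (e : E) (he : 0 < e) :
    IsBandSet {y : E | ∀ z : E, 0 ≤ z → z ⊓ e = 0 → z ⊓ |y| = 0} ∧
      e ∈ {y : E | ∀ z : E, 0 ≤ z → z ⊓ e = 0 → z ⊓ |y| = 0} := by
  set T := {y : E | ∀ z : E, 0 ≤ z → z ⊓ e = 0 → z ⊓ |y| = 0} with hT
  have habs : ∀ y : E, |y| = y ⊔ -y := fun y => rfl
  have habsnn : ∀ y : E, (0:E) ≤ |y| := fun y => frd_abs_nonneg y
  constructor
  · constructor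
    · refine ⟨?_, ?_, ?_, ?_⟩
      · -- 0 ∈ T
        intro z hz _
        have : |(0:E)| = 0 := by rw [habs]; simp
        rw [this]
        exact inf_eq_right.2 hz
      · -- closed under +
        intro a ha b hb z hz hze
        have h1 : |a + b| ≤ |a| + |b| := by
          rw [habs, habs, habs]
          refine sup_le (add_le_add le_sup_left le_sup_left) ?_
          rw [neg_add]
          exact add_le_add le_sup_right le_sup_right
        have h2 : z ⊓ |a + b| ≤ z ⊓ (|a| + |b|) := inf_le_inf_left z h1
        have h3 : z ⊓ (|a| + |b|) ≤ z ⊓ |a| + z ⊓ |b| :=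
          frd_inf_add hz (habsnn a) (habsnn b)
        rw [ha z hz hze, hb z hz hze, add_zero] at h3
        exact le_antisymm (le_trans h2 h3) (le_inf hz (habsnn _))
      · -- closed under smul
        intro c a ha z hz hze
        have h1 : |c • a| ≤ |c| • |a| := by
          rw [habs (c • a)]
          rcases le_or_gt 0 c with hc | hc
          · refine sup_le ?_ ?_
            · rw [abs_of_nonneg hc]
              exact smul_le_smul_of_nonneg_left (le_sup_left) hc
            · rw [abs_of_nonneg hc, ← smul_neg]
              exact smul_le_smul_of_nonneg_left (le_sup_right) hc
          · refine sup_le ?_ ?_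
            · rw [abs_of_neg hc]
              have : c • a = (-c) • (-a) := by rw [neg_smul_neg]
              rw [this]
              exact smul_le_smul_of_nonneg_left (le_sup_right) (by linarith)
            · rw [abs_of_neg hc]
              have : -(c • a) = (-c) • a := by rw [neg_smul]
              rw [this]
              exact smul_le_smul_of_nonneg_left (le_sup_left) (by linarith)
        have h2 : z ⊓ (|c| • |a|) = 0 :=
          frd_inf_rsmul hz (habsnn a) (abs_nonneg c) (ha z hz hze)
        have h3 : z ⊓ |c • a| ≤ z ⊓ (|c| • |a|) := inf_le_inf_left z h1
        rw [h2] at h3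
        exact le_antisymm h3 (le_inf hz (habsnn _))
      · -- solid
        intro a ha b hab z hz hze
        have h1 : z ⊓ |b| ≤ z ⊓ |a| := inf_le_inf_left z hab
        rw [ha z hz hze] at h1
        exact le_antisymm h1 (le_inf hz (habsnn _))
    · -- order closed
      intro C hC b hb z hz hze
      obtain ⟨c0, hc0⟩ := frd_C_nonempty he hb
      have hsup0 := frd_isLUB_sup0 ⟨c0, hc0⟩ hb
      have hzp : z ⊓ (b ⊔ 0) = 0 := by
        refine frd_isLUB_inf_zero_set (S := (fun c => c ⊔ 0) '' C) ⟨c0 ⊔ 0, ⟨c0, hc0, rfl⟩⟩ hsup0 ?_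
        rintro _ ⟨c, hc, rfl⟩
        have h1 : c ⊔ 0 ≤ |c| := by
          rw [habs]; exact sup_le le_sup_left (habsnn c)
        have h2 : z ⊓ (c ⊔ 0) ≤ z ⊓ |c| := inf_le_inf_left z h1
        rw [hC hc z hz hze] at h2
        exact le_antisymm h2 (le_inf hz le_sup_right)
      have hzn : z ⊓ ((-b) ⊔ 0) = 0 := by
        have hneg : -b ≤ -c0 := by
          have h' := add_le_add_left (hb.1 hc0) (-c0 - b)
          calc -b = c0 + (-c0 - b) := by abel
          _ ≤ b + (-c0 - b) := h'
          _ = -c0 := by abel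
        have h1 : (-b) ⊔ 0 ≤ (-c0) ⊔ 0 := sup_le_sup_right hneg 0
        have h2 : (-c0) ⊔ 0 ≤ |c0| := by
          rw [habs]; exact sup_le le_sup_right (habsnn c0)
        have h3 : z ⊓ ((-b) ⊔ 0) ≤ z ⊓ |c0| := inf_le_inf_left z (le_trans h1 h2)
        rw [hC hc0 z hz hze] at h3
        exact le_antisymm h3 (le_inf hz le_sup_right)
      have h4 : |b| ≤ (b ⊔ 0) + ((-b) ⊔ 0) := by
        rw [habs]
        refine sup_le ?_ ?_
        · exact le_trans le_sup_left (le_add_of_nonneg_right le_sup_right)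
        · exact le_trans (le_sup_left : -b ≤ (-b) ⊔ 0) (le_add_of_nonneg_left le_sup_right)
      have h5 : z ⊓ |b| ≤ z ⊓ ((b ⊔ 0) + ((-b) ⊔ 0)) := inf_le_inf_left z h4
      have h6 : z ⊓ ((b ⊔ 0) + ((-b) ⊔ 0)) ≤ z ⊓ (b ⊔ 0) + z ⊓ ((-b) ⊔ 0) :=
        frd_inf_add hz le_sup_right le_sup_right
      rw [hzp, hzn, add_zero] at h6
      exact le_antisymm (le_trans h5 h6) (le_inf hz (habsnn b))
  · -- e ∈ T
    intro z hz hze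
    have : |e| = e := by
      rw [habs]
      exact sup_eq_left.2 (le_trans (neg_nonpos.2 he.le) he.le)
    rw [this]
    exact hze



lemma frd_comp_w_disj
    (hσ : ∀ f : ℕ → E, BddAbove (Set.range f) → ∃ b, IsLUB (Set.range f) b)
    {e w p : E} (he' : 0 ≤ e) (hw : 0 ≤ w)
    (hp : IsLUB (Set.range fun k : ℕ => e ⊓ k • w) p) : (e - p) ⊓ w = 0 := by
  have hpe : p ≤ e := hp.2 (by rintro _ ⟨k, rfl⟩; exact inf_le_left)
  set u := (e - p) ⊓ w with hu
  have hu0 : 0 ≤ u := le_inf (sub_nonneg.2 hpe) hw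
  have hkey : ∀ k : ℕ, k • u ≤ e := by
    intro k; induction k with
    | zero => simpa using he'
    | succ n ih =>
      have h1 : u ≤ (e - n • w) ⊔ 0 := by
        have h2 : e ⊓ (n • w) ≤ p := hp.1 ⟨n, rfl⟩
        have h3 : u ≤ e - e ⊓ (n • w) := le_trans inf_le_left (sub_le_sub_left h2 e)
        rwa [frd_sub_inf] at h3
      have h4 : n • u ≤ n • w := nsmul_le_nsmul_right inf_le_right n
      calc (n+1) • u = n • u + u := succ_nsmul u n
      _ ≤ n • u + ((e - n • w) ⊔ 0) := add_le_add_right h1 _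
      _ = (n • u + (e - n • w)) ⊔ (n • u + 0) := add_sup _ _ _
      _ ≤ e ⊔ e := by
          refine sup_le_sup ?_ ?_
          · calc n • u + (e - n • w) ≤ n • w + (e - n • w) := add_le_add_left h4 _
            _ = e := by abel
          · simpa using ih
      _ = e := sup_idem e
  exact le_antisymm (frd_arch hσ hkey) hu0

lemma frd_comp_band {e w p z : E} (he' : 0 ≤ e) (hw : 0 ≤ w)
    (hp : IsLUB (Set.range fun k : ℕ => e ⊓ k • w) p)
    (hz : 0 ≤ z) (hzw : z ⊓ w = 0) : z ⊓ p = 0 := by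
  refine frd_isLUB_inf_zero hp ?_
  intro k
  have h1 : z ⊓ (k • w) = 0 := frd_inf_nsmul hz hw hzw k
  have h2 : z ⊓ (e ⊓ k • w) ≤ z ⊓ (k • w) := inf_le_inf_left z inf_le_right
  rw [h1] at h2
  exact le_antisymm h2 (le_inf hz (le_inf he' (nsmul_nonneg hw k)))

/-- Freudenthal-type theorem for bands: in a Dedekind `σ`-complete Riesz space,
every `x ≥ 0` in the band generated by `e > 0` is the increasing order limit of a
sequence of `e`-simple elements `uₙ` with `0 ≤ x - uₙ ≤ (1/n) e`. -/
theorem stmt18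
    (hσ : ∀ f : ℕ → E, BddAbove (Set.range f) → ∃ b, IsLUB (Set.range f) b)
    (e : E) (he : 0 < e) (x : E) (hx : x ∈ bandGen e) (hx0 : 0 ≤ x) :
    ∃ u : ℕ → E, (∀ n, IsESimple e (u n)) ∧ Monotone u ∧
      (∀ n : ℕ, 0 ≤ x - u n ∧ x - u n ≤ ((n : ℝ) + 1)⁻¹ • e) ∧
      IsLUB (Set.range u) x := by
  have he' : (0:E) ≤ e := he.le
  -- x is in the double disjoint complement of e
  have hxT : ∀ z : E, 0 ≤ z → z ⊓ e = 0 → z ⊓ x = 0 := by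
    have hmem := hx _ ⟨(frd_T_band e he).1, (frd_T_band e he).2⟩
    intro z hz hze
    have h1 := hmem z hz hze
    have habsx : |x| = x := sup_eq_left.2 (le_trans (neg_nonpos.2 hx0) hx0)
    rwa [habsx] at h1
  -- Step A : x = sup (x ⊓ k e)
  obtain ⟨s, hs⟩ := hσ (fun k : ℕ => x ⊓ k • e) ⟨x, by rintro _ ⟨k, rfl⟩; exact inf_le_left⟩
  have hsx : s ≤ x := hs.2 (by rintro _ ⟨k, rfl⟩; exact inf_le_left)
  have hs0 : 0 ≤ s := by
    have h1 := hs.1 ⟨0, rfl⟩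
    simpa [inf_eq_right.2 hx0] using h1
  have hA : IsLUB (Set.range fun k : ℕ => x ⊓ k • e) x := by
    have hv : ∀ k : ℕ, k • ((x - s) ⊓ e) ≤ x := by
      intro k; induction k with
      | zero => simpa using hx0
      | succ n ih =>
        have h1 : (x - s) ≤ (x - n • e) ⊔ 0 := by
          have h2 := sub_le_sub_left (hs.1 ⟨n, rfl⟩) x
          rwa [frd_sub_inf] at h2
        have hv_le : (x - s) ⊓ e ≤ (x - n • e) ⊔ 0 := le_trans inf_le_left h1
        have h4 : n • ((x - s) ⊓ e) ≤ n • e := nsmul_le_nsmul_right inf_le_right n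
        calc (n+1) • ((x - s) ⊓ e) = n • ((x - s) ⊓ e) + (x - s) ⊓ e := succ_nsmul _ n
        _ ≤ n • ((x - s) ⊓ e) + ((x - n • e) ⊔ 0) := add_le_add_right hv_le _
        _ = (n • ((x - s) ⊓ e) + (x - n • e)) ⊔ (n • ((x - s) ⊓ e) + 0) := add_sup _ _ _
        _ ≤ x ⊔ x := by
            refine sup_le_sup ?_ ?_
            · calc n • ((x - s) ⊓ e) + (x - n • e) ≤ n • e + (x - n • e) := add_le_add_left h4 _
              _ = x := by abel
            · simpa using ih
        _ = x := sup_idem x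
    have hdis : (x - s) ⊓ e = 0 :=
      le_antisymm (frd_arch hσ hv) (le_inf (sub_nonneg.2 hsx) he')
    have hdx : (x - s) ⊓ x = 0 := hxT _ (sub_nonneg.2 hsx) hdis
    have hxs : x = s := by
      have h1 : x - s ≤ x := sub_le_self x hs0
      have h2 : x - s = 0 := by rw [← hdx, inf_eq_left.2 h1]
      have h3 : x = s := by
        have := congrArg (· + s) h2
        simpa using this
      exact h3
    exact hxs ▸ hs
  -- the dyadic scales
  set ε : ℕ → ℝ := fun n => ((2:ℝ) ^ n)⁻¹ with hεdef
  have hεpos : ∀ n, 0 < ε n := fun n => by rw [hεdef]; positivity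
  have hhalf : ∀ n, ε n = 2 * ε (n+1) := by
    intro n; rw [hεdef]; simp only; rw [pow_succ]
    field_simp
  -- the components Q t
  have hQex : ∀ t : ℝ, ∃ p, IsLUB (Set.range fun k : ℕ => e ⊓ k • ((x - t • e) ⊔ 0)) p :=
    fun t => hσ _ ⟨e, by rintro _ ⟨k, rfl⟩; exact inf_le_left⟩
  choose Q hQ using hQex
  have hw0 : ∀ t : ℝ, (0:E) ≤ (x - t • e) ⊔ 0 := fun t => le_sup_right
  have hQ0 : ∀ t, 0 ≤ Q t := by
    intro t
    have h1 := (hQ t).1 ⟨0, rfl⟩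
    simpa [inf_eq_right.2 he'] using h1
  have hQe : ∀ t, Q t ≤ e := fun t => (hQ t).2 (by rintro _ ⟨k, rfl⟩; exact inf_le_left)
  have hQw : ∀ t, (e - Q t) ⊓ ((x - t • e) ⊔ 0) = 0 :=
    fun t => frd_comp_w_disj hσ he' (hw0 t) (hQ t)
  have hQband : ∀ t, ∀ z : E, 0 ≤ z → z ⊓ ((x - t • e) ⊔ 0) = 0 → z ⊓ Q t = 0 :=
    fun t z hz hzw => frd_comp_band he' (hw0 t) (hQ t) hz hzw
  have hQfrag : ∀ t, Q t ⊓ (e - Q t) = 0 := fun t => by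
    rw [inf_comm]; exact hQband t _ (sub_nonneg.2 (hQe t)) (hQw t)
  have hQmono : ∀ s t : ℝ, s ≤ t → Q t ≤ Q s := by
    intro s' t hst
    refine (hQ t).2 ?_
    rintro _ ⟨k, rfl⟩
    have h1 : (x - t • e) ⊔ 0 ≤ (x - s' • e) ⊔ 0 :=
      sup_le_sup_right (sub_le_sub_left (frd_smul_right_mono hst he') x) 0
    exact le_trans (inf_le_inf_left e (nsmul_le_nsmul_right h1 k)) ((hQ s').1 ⟨k, rfl⟩)
  have hQA : ∀ t : ℝ, 0 ≤ t → t • Q t ≤ x := by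
    intro t ht
    have hz0 : (0:E) ≤ (t • e - x) ⊔ 0 := le_sup_right
    have hzw : ((t • e - x) ⊔ 0) ⊓ ((x - t • e) ⊔ 0) = 0 := by
      have h1 := frd_posneg (x - t • e)
      rw [neg_sub] at h1
      rw [inf_comm]
      exact h1
    have h1 : ((t • e - x) ⊔ 0) ⊓ Q t = 0 := hQband t _ hz0 hzw
    have h2 : ((t • e - x) ⊔ 0) ⊓ (t • Q t) = 0 := frd_inf_rsmul hz0 (hQ0 t) ht h1
    have h3 : t • Q t - x ≤ (t • e - x) ⊔ 0 :=
      le_trans (sub_le_sub_right (smul_le_smul_of_nonneg_left (hQe t) ht) x) le_sup_left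
    have h4 : t • Q t - x ≤ t • Q t := sub_le_self _ hx0
    have h5 : t • Q t - x ≤ 0 := by
      have h6 := le_inf h3 h4
      rwa [h2] at h6
    exact sub_nonpos.1 h5
  -- fragments at scale n
  set q : ℕ → ℕ → E := fun n i => Q ((i : ℝ) * ε n) with hqdef
  set f : ℕ → ℕ → E := fun n i => q n i - q n (i+1) with hfdef
  set g : ℕ → ℕ → E := fun n i => ((i : ℝ) * ε n) • f n i with hgdef
  have hcoeff : ∀ n i : ℕ, (0:ℝ) ≤ (i : ℝ) * ε n :=
    fun n i => mul_nonneg (Nat.cast_nonneg i) (hεpos n).le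
  have hqmono : ∀ n i j, i ≤ j → q n j ≤ q n i := by
    intro n i j hij
    simp only [hqdef]
    exact hQmono _ _ (mul_le_mul_of_nonneg_right (Nat.cast_le.2 hij) (hεpos n).le)
  have hq0 : ∀ n i, 0 ≤ q n i := by intro n i; simp only [hqdef]; exact hQ0 _
  have hqe : ∀ n i, q n i ≤ e := by intro n i; simp only [hqdef]; exact hQe _
  have hqfrag : ∀ n i, q n i ⊓ (e - q n i) = 0 := by
    intro n i; simp only [hqdef]; exact hQfrag _
  have hf0 : ∀ n i, 0 ≤ f n i := by
    intro n i; simp only [hfdef]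
    exact sub_nonneg.2 (hqmono n i (i+1) (Nat.le_succ i))
  have hfq : ∀ n i, f n i ≤ q n i := by
    intro n i; simp only [hfdef]; exact sub_le_self _ (hq0 n (i+1))
  have hfe : ∀ n i, f n i ≤ e := fun n i => le_trans (hfq n i) (hqe n i)
  have hfqe : ∀ n i, f n i ≤ e - q n (i+1) := by
    intro n i; simp only [hfdef]; exact sub_le_sub_right (hqe n i) _
  have hffrag : ∀ n i, IsFragment e (f n i) := by
    intro n i
    refine ⟨hf0 n i, hfe n i, ?_⟩
    have hme : e - f n i = (e - q n i) + q n (i+1) := by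
      simp only [hfdef]; abel
    have h1 : f n i ⊓ (e - q n i) = 0 := by
      have h2 : f n i ⊓ (e - q n i) ≤ q n i ⊓ (e - q n i) := inf_le_inf_right _ (hfq n i)
      rw [hqfrag n i] at h2
      exact le_antisymm h2 (le_inf (hf0 n i) (sub_nonneg.2 (hqe n i)))
    have h2 : f n i ⊓ q n (i+1) = 0 := by
      have h3 : f n i ⊓ q n (i+1) ≤ (e - q n (i+1)) ⊓ q n (i+1) := inf_le_inf_right _ (hfqe n i)
      rw [inf_comm (e - q n (i+1)) (q n (i+1)), hqfrag n (i+1)] at h3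
      exact le_antisymm h3 (le_inf (hf0 n i) (hq0 n (i+1)))
    have h4 : f n i ⊓ ((e - q n i) + q n (i+1)) ≤ f n i ⊓ (e - q n i) + f n i ⊓ q n (i+1) :=
      frd_inf_add (hf0 n i) (sub_nonneg.2 (hqe n i)) (hq0 n (i+1))
    rw [h1, h2, add_zero] at h4
    rw [hme]
    exact le_antisymm h4 (le_inf (hf0 n i) (by rw [← hme]; exact sub_nonneg.2 (hfe n i)))
  have hfdisj : ∀ n i j, i ≠ j → f n i ⊓ f n j = 0 := by
    have key : ∀ n i j, i < j → f n i ⊓ f n j = 0 := by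
      intro n i j hij
      have h1 : f n j ≤ q n (i+1) := le_trans (hfq n j) (hqmono n (i+1) j hij)
      have h2 : f n i ⊓ f n j ≤ (e - q n (i+1)) ⊓ q n (i+1) :=
        inf_le_inf (hfqe n i) h1
      rw [inf_comm (e - q n (i+1)) (q n (i+1)), hqfrag n (i+1)] at h2
      exact le_antisymm h2 (le_inf (hf0 n i) (hf0 n j))
    intro n i j hij
    rcases lt_or_gt_of_ne hij with h | h
    · exact key n i j h
    · rw [inf_comm]; exact key n j i h
  have hg0 : ∀ n i, 0 ≤ g n i := by
    intro n i; simp only [hgdef]; exact smul_nonneg (hcoeff n i) (hf0 n i)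
  have hgx : ∀ n i, g n i ≤ x := by
    intro n i
    simp only [hgdef]
    refine le_trans (smul_le_smul_of_nonneg_left (hfq n i) (hcoeff n i)) ?_
    have h1 : ((i:ℝ) * ε n) • q n i = ((i:ℝ) * ε n) • Q ((i:ℝ) * ε n) := by rw [hqdef]
    rw [h1]
    exact hQA _ (hcoeff n i)
  have huex : ∀ n, ∃ b, IsLUB (Set.range (g n)) b :=
    fun n => hσ _ ⟨x, by rintro _ ⟨i, rfl⟩; exact hgx n i⟩
  choose u hu using huex
  have hu0 : ∀ n, 0 ≤ u n := by
    intro n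
    have h1 := (hu n).1 ⟨0, rfl⟩
    have h2 : g n 0 = 0 := by simp [hgdef]
    rwa [h2] at h1
  have hux : ∀ n, u n ≤ x := fun n => (hu n).2 (by rintro _ ⟨i, rfl⟩; exact hgx n i)
  -- e-simplicity
  have hsimple : ∀ n, IsESimple e (u n) := by
    intro n
    refine ⟨fun i => (i:ℝ) * ε n, f n, u n, 0, hffrag n, hfdisj n, ?_, ?_, (sub_zero _).symm⟩
    · have heq : (fun i : ℕ => (((i:ℝ) * ε n) • f n i) ⊔ 0) = g n := by
        funext i
        simp only [hgdef]
        exact sup_eq_left.2 (smul_nonneg (hcoeff n i) (hf0 n i))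
      show IsLUB (Set.range fun i : ℕ => (((i:ℝ) * ε n) • f n i) ⊔ 0) (u n)
      rw [heq]; exact hu n
    · have heq : (fun i : ℕ => (-(((i:ℝ) * ε n) • f n i)) ⊔ 0) = fun _ : ℕ => (0:E) := by
        funext i
        exact sup_eq_right.2 (neg_nonpos.2 (smul_nonneg (hcoeff n i) (hf0 n i)))
      show IsLUB (Set.range fun i : ℕ => (-(((i:ℝ) * ε n) • f n i)) ⊔ 0) (0:E)
      rw [heq, Set.range_const]
      exact isLUB_singleton
  -- the upper bound x - u n ≤ ε n • e
  have hub : ∀ n, x - u n ≤ ε n • e := by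
    intro n
    set h := (x - u n - ε n • e) ⊔ 0 with hhdef
    have hh0 : 0 ≤ h := le_sup_right
    have hhx : h ≤ x := by
      refine sup_le ?_ hx0
      calc x - u n - ε n • e ≤ x - u n := sub_le_self _ (smul_nonneg (hεpos n).le he')
      _ ≤ x := sub_le_self _ (hu0 n)
    have hhf : ∀ i, h ⊓ f n i = 0 := by
      intro i
      have h1 : h ≤ (x - g n i - ε n • e) ⊔ 0 :=
        sup_le_sup_right (sub_le_sub_right (sub_le_sub_left ((hu n).1 ⟨i, rfl⟩) x) _) 0
      have hc0 : (0:E) ≤ ((i:ℝ) * ε n) • (e - f n i) :=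
        smul_nonneg (hcoeff n i) (sub_nonneg.2 (hfe n i))
      have key : x - g n i - ε n • e
          = (x - (((i+1:ℕ):ℝ) * ε n) • e) + ((i:ℝ) * ε n) • (e - f n i) := by
        simp only [hgdef, hfdef]
        push_cast
        module
      have h2 : h ≤ ((x - (((i+1:ℕ):ℝ) * ε n) • e) ⊔ 0) + ((i:ℝ) * ε n) • (e - f n i) := by
        refine le_trans h1 ?_
        rw [key]
        exact frd_sup_add_le _ hc0
      have h3 : f n i ⊓ (((x - (((i+1:ℕ):ℝ) * ε n) • e) ⊔ 0) + ((i:ℝ) * ε n) • (e - f n i))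
          ≤ f n i ⊓ ((x - (((i+1:ℕ):ℝ) * ε n) • e) ⊔ 0) + f n i ⊓ (((i:ℝ) * ε n) • (e - f n i)) :=
        frd_inf_add (hf0 n i) le_sup_right hc0
      have h5 : f n i ⊓ ((x - (((i+1:ℕ):ℝ) * ε n) • e) ⊔ 0) = 0 := by
        have h6 : f n i ≤ e - Q (((i+1:ℕ):ℝ) * ε n) := by
          have := hfqe n i
          rwa [hqdef] at this
        have h7 : f n i ⊓ ((x - (((i+1:ℕ):ℝ) * ε n) • e) ⊔ 0)
            ≤ (e - Q (((i+1:ℕ):ℝ) * ε n)) ⊓ ((x - (((i+1:ℕ):ℝ) * ε n) • e) ⊔ 0) :=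
          inf_le_inf_right _ h6
        rw [hQw] at h7
        exact le_antisymm h7 (le_inf (hf0 n i) le_sup_right)
      have h6 : f n i ⊓ (((i:ℝ) * ε n) • (e - f n i)) = 0 :=
        frd_inf_rsmul (hf0 n i) (sub_nonneg.2 (hfe n i)) (hcoeff n i) ((hffrag n i).2.2)
      rw [h5, h6, add_zero] at h3
      have h7 : h ⊓ f n i ≤ 0 := by
        calc h ⊓ f n i ≤ (((x - (((i+1:ℕ):ℝ) * ε n) • e) ⊔ 0) + ((i:ℝ) * ε n) • (e - f n i)) ⊓ f n i :=
          inf_le_inf_right _ h2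
        _ = f n i ⊓ (((x - (((i+1:ℕ):ℝ) * ε n) • e) ⊔ 0) + ((i:ℝ) * ε n) • (e - f n i)) := inf_comm _ _
        _ ≤ 0 := h3
      exact le_antisymm h7 (le_inf hh0 (hf0 n i))
    have hhq : ∀ m, h ⊓ (e - q n m) = 0 := by
      intro m; induction m with
      | zero =>
        have ht0 : ((0:ℕ):ℝ) * ε n = 0 := by push_cast; ring
        have hw0x : ((x - (0:ℝ) • e) ⊔ 0) = x := by
          rw [zero_smul, sub_zero]; exact sup_eq_left.2 hx0
        have h1 : (e - Q 0) ⊓ x = 0 := by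
          have h2 := hQw 0
          rwa [hw0x] at h2
        have h2 : h ⊓ (e - Q 0) ≤ x ⊓ (e - Q 0) := inf_le_inf_right _ hhx
        rw [inf_comm x _, h1] at h2
        have h3 : h ⊓ (e - q n 0) = h ⊓ (e - Q 0) := by rw [hqdef]; norm_num
        rw [h3]
        exact le_antisymm h2 (le_inf hh0 (sub_nonneg.2 (hQe 0)))
      | succ m ih =>
        have hme : e - q n (m+1) = (e - q n m) + f n m := by
          simp only [hfdef]; abel
        rw [hme]
        have h1 : h ⊓ ((e - q n m) + f n m) ≤ h ⊓ (e - q n m) + h ⊓ f n m :=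
          frd_inf_add hh0 (sub_nonneg.2 (hqe n m)) (hf0 n m)
        rw [ih, hhf m, add_zero] at h1
        exact le_antisymm h1 (le_inf hh0 (by rw [← hme]; exact sub_nonneg.2 (hqe n (m+1))))
    have hhe : h ⊓ e = 0 := by
      have hhq' : ∀ m : ℕ, h ⊓ e ≤ q n (m+1) := by
        intro m
        have h1 : h ⊓ e = h ⊓ ((e - q n (m+1)) + q n (m+1)) := by
          rw [sub_add_cancel]
        have h2 : h ⊓ ((e - q n (m+1)) + q n (m+1)) ≤ h ⊓ (e - q n (m+1)) + h ⊓ q n (m+1) :=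
          frd_inf_add hh0 (sub_nonneg.2 (hqe n (m+1))) (hq0 n (m+1))
        rw [hhq (m+1), zero_add] at h2
        rw [h1]
        exact le_trans h2 inf_le_right
      have harch : ∀ k : ℕ, k • (h ⊓ e) ≤ x := by
        intro k
        have h2n : (0:ℝ) < 2 ^ n := by positivity
        have hcast : (((k * 2^n + 1 : ℕ)):ℝ) * ε n = (k:ℝ) + ε n := by
          have h2n' : ((2:ℝ)^n) ≠ 0 := by positivity
          rw [hεdef]; push_cast
          rw [add_mul, one_mul, mul_assoc, mul_inv_cancel₀ h2n', mul_one]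
        have hck : (k:ℝ) ≤ ((k * 2^n + 1 : ℕ):ℝ) * ε n := by
          rw [hcast]
          have := (hεpos n).le
          linarith
        have hhe0 : (0:E) ≤ h ⊓ e := le_inf hh0 he'
        calc k • (h ⊓ e) = (k:ℝ) • (h ⊓ e) := (Nat.cast_smul_eq_nsmul ℝ k _).symm
        _ ≤ (((k * 2^n + 1 : ℕ):ℝ) * ε n) • (h ⊓ e) := frd_smul_right_mono hck hhe0
        _ ≤ (((k * 2^n + 1 : ℕ):ℝ) * ε n) • q n (k * 2^n + 1) := by
            refine smul_le_smul_of_nonneg_left ?_ (hcoeff n _)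
            have := hhq' (k * 2^n)
            exact this
        _ ≤ x := by
            have h3 : q n (k * 2^n + 1) = Q (((k * 2^n + 1 : ℕ):ℝ) * ε n) := by rw [hqdef]
            rw [h3]
            exact hQA _ (hcoeff n _)
      have := frd_arch hσ harch
      exact le_antisymm this (le_inf hh0 he')
    have hhzero : h = 0 := by
      have h1 : h ⊓ x = 0 := by
        refine frd_isLUB_inf_zero hA ?_
        intro k
        have h2 : h ⊓ (k • e) = 0 := frd_inf_nsmul hh0 he' hhe k
        have h3 : h ⊓ (x ⊓ k • e) ≤ h ⊓ (k • e) := inf_le_inf_left h inf_le_right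
        rw [h2] at h3
        exact le_antisymm h3 (le_inf hh0 (le_inf hx0 (nsmul_nonneg he' k)))
      rw [← h1, inf_eq_left.2 hhx]
    have h1 : x - u n - ε n • e ≤ 0 := le_trans le_sup_left (le_of_eq hhzero)
    have h2 : x - u n ≤ ε n • e := by
      have := add_le_add_left h1 (ε n • e)
      rwa [sub_add_cancel, zero_add] at this
    exact h2
  -- monotonicity
  have hmono : ∀ n, u n ≤ u (n+1) := by
    intro n
    refine (hu n).2 ?_
    rintro _ ⟨i, rfl⟩
    have e1 : ((i:ℝ)) * ε n = (((2*i : ℕ)):ℝ) * ε (n+1) := by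
      rw [hhalf n]; push_cast; ring
    have e2 : (((i+1:ℕ)):ℝ) * ε n = (((2*i+2 : ℕ)):ℝ) * ε (n+1) := by
      rw [hhalf n]; push_cast; ring
    have hq1 : q n i = q (n+1) (2*i) := by
      simp only [hqdef]; rw [e1]
    have hq2 : q n (i+1) = q (n+1) (2*i+2) := by
      simp only [hqdef]; exact congrArg Q e2
    have hc1 : (0:ℝ) ≤ ((2*i : ℕ):ℝ) * ε (n+1) := hcoeff (n+1) (2*i)
    have hstep : g n i ≤ g (n+1) (2*i) + g (n+1) (2*i+1) := by
      have hgni : g n i = ((((2*i:ℕ)):ℝ) * ε (n+1)) •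
          ((q (n+1) (2*i) - q (n+1) (2*i+1)) + (q (n+1) (2*i+1) - q (n+1) (2*i+2))) := by
        simp only [hgdef, hfdef]
        rw [e1, hq1, hq2]
        congr 1
        abel
      rw [hgni, smul_add]
      have hterm1 : ((((2*i:ℕ)):ℝ) * ε (n+1)) • (q (n+1) (2*i) - q (n+1) (2*i+1)) = g (n+1) (2*i) := by
        simp only [hgdef, hfdef]
      have hf2 : (0:E) ≤ q (n+1) (2*i+1) - q (n+1) (2*i+2) := by
        have h9 := hf0 (n+1) (2*i+1)
        simp only [hfdef] at h9
        convert h9 using 3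
      have hterm2 : ((((2*i:ℕ)):ℝ) * ε (n+1)) • (q (n+1) (2*i+1) - q (n+1) (2*i+2)) ≤ g (n+1) (2*i+1) := by
        have hle : ((((2*i:ℕ)):ℝ) * ε (n+1)) ≤ (((2*i+1:ℕ)):ℝ) * ε (n+1) :=
          mul_le_mul_of_nonneg_right (by push_cast; linarith) (hεpos (n+1)).le
        have h8 := frd_smul_right_mono hle hf2
        refine le_trans h8 ?_
        have heq2 : g (n+1) (2*i+1) = ((((2*i+1:ℕ)):ℝ) * ε (n+1)) • (q (n+1) (2*i+1) - q (n+1) (2*i+2)) := by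
          simp only [hgdef, hfdef]
        rw [heq2]
      rw [hterm1]
      exact add_le_add_right hterm2 _
    have hdisj2 : g (n+1) (2*i) ⊓ g (n+1) (2*i+1) = 0 := by
      simp only [hgdef]
      exact frd_disj_smul (hf0 (n+1) (2*i)) (hf0 (n+1) (2*i+1)) (hcoeff (n+1) (2*i))
        (hcoeff (n+1) (2*i+1)) (hfdisj (n+1) (2*i) (2*i+1) (by omega))
    have hsum2 : g (n+1) (2*i) + g (n+1) (2*i+1) ≤ u (n+1) := by
      have hias := inf_add_sup (g (n+1) (2*i)) (g (n+1) (2*i+1))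
      rw [hdisj2, zero_add] at hias
      rw [← hias]
      exact sup_le ((hu (n+1)).1 ⟨2*i, rfl⟩) ((hu (n+1)).1 ⟨2*i+1, rfl⟩)
    exact le_trans hstep hsum2
  -- conclusion
  refine ⟨u, hsimple, monotone_nat_of_le_succ hmono, ?_, ?_⟩
  · intro n
    refine ⟨sub_nonneg.2 (hux n), ?_⟩
    have h2n : ε n ≤ ((n:ℝ) + 1)⁻¹ := by
      rw [hεdef]
      have h1 : ((n:ℝ) + 1) ≤ 2 ^ n := by
        have h2 : (n + 1 : ℕ) ≤ 2 ^ n := Nat.lt_two_pow_self (n := n)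
        exact_mod_cast h2
      exact inv_anti₀ (by positivity) h1
    exact le_trans (hub n) (frd_smul_right_mono h2n he')
  · constructor
    · rintro _ ⟨n, rfl⟩; exact hux n
    · intro v hv
      have hzn : ∀ n, (x - v) ⊔ 0 ≤ ε n • e := by
        intro n
        have h1 : x - v ≤ ε n • e :=
          le_trans (sub_le_sub_left (hv ⟨n, rfl⟩) x) (hub n)
        exact sup_le h1 (smul_nonneg (hεpos n).le he')
      have harch : ∀ k : ℕ, k • ((x - v) ⊔ 0) ≤ e := by
        intro k
        have hk : (k:ℝ) ≤ (2:ℝ) ^ k := by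
          calc (k:ℝ) ≤ ((2^k : ℕ):ℝ) := by exact_mod_cast (Nat.lt_two_pow_self (n := k)).le
          _ = (2:ℝ) ^ k := by push_cast; ring
        calc k • ((x - v) ⊔ 0) = (k:ℝ) • ((x - v) ⊔ 0) := (Nat.cast_smul_eq_nsmul ℝ k _).symm
        _ ≤ ((2:ℝ) ^ k) • ((x - v) ⊔ 0) := frd_smul_right_mono hk le_sup_right
        _ ≤ ((2:ℝ) ^ k) • (ε k • e) := smul_le_smul_of_nonneg_left (hzn k) (by positivity)
        _ = e := by
            rw [smul_smul, hεdef]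
            simp only
            rw [mul_inv_cancel₀ (by positivity), one_smul]
      have h2 : (x - v) ⊔ 0 ≤ 0 := frd_arch hσ harch
      have h3 : x - v ≤ 0 := le_trans le_sup_left h2
      exact sub_nonpos.1 h3


end
end
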